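/- arXiv:0804.4047 — 9 statements merged into one kernel-verified Lean document; each statement's English description precedes it below -/
import Mathlib

section
/- Let L and M be even lattices and U the hyperbolic plane with standard basis e, f. If there is an isometry φ : L ⊕ U → M ⊕ U with φ(f) = f, then the composition of φ restricted to L with the orthogonal projection onto M is an isometry L ≅ M. -/
/-!
Pairing with `f` reads off the `e`-coordinate, so an isometry fixing `f` preserves the
`e`-coordinate; in particular it maps `f^⊥ = L ⊕ ℤf` onto `f^⊥ = M ⊕ ℤf` and is the identity on
`ℤf`. Hence it induces an isometry `(L ⊕ ℤf) / ℤf ≅ (M ⊕ ℤf) / ℤf`, which is `pr_M ∘ φ|_L`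
under the identifications of these quotients with `L` and `M`.
-/

namespace HyperbolicSum

variable {L M : Type*} [AddCommGroup L] [AddCommGroup M]

/-- `pr_M ∘ φ|_L`. -/
def prComp (φ : (L × ℤ × ℤ) ≃ₗ[ℤ] (M × ℤ × ℤ)) : L →+ M :=
  (AddMonoidHom.fst M (ℤ × ℤ)).comp (φ.toAddMonoidHom.comp (AddMonoidHom.inl L (ℤ × ℤ)))

theorem prComp_apply (φ : (L × ℤ × ℤ) ≃ₗ[ℤ] (M × ℤ × ℤ)) (x : L) :
    prComp φ x = (φ (x, 0, 0)).1 :=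
  rfl

theorem f_smul_eq_zsmul (N : Type*) [AddCommGroup N] (b : ℤ) :
    ((0 : N), (0 : ℤ), b) = b • ((0 : N), (0 : ℤ), (1 : ℤ)) := by
  simp only [Prod.smul_mk, zsmul_zero, smul_eq_mul, mul_one, mul_zero]

theorem map_f_smul {φ : (L × ℤ × ℤ) ≃ₗ[ℤ] (M × ℤ × ℤ)} (hf : φ (0, 0, 1) = (0, 0, 1)) (b : ℤ) :
    φ (0, 0, b) = (0, 0, b) := by
  rw [f_smul_eq_zsmul L b, map_zsmul, hf, ← f_smul_eq_zsmul M b]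

variable [Module ℤ L] [Module ℤ M]

/-- The form on `L ⊕ U`, where `(x, a, b)` stands for `x + a e + b f`. -/
def form (B : L →ₗ[ℤ] L →ₗ[ℤ] ℤ) (v w : L × ℤ × ℤ) : ℤ :=
  B v.1 w.1 + v.2.1 * w.2.2 + w.2.1 * v.2.2

theorem form_f_right (B : L →ₗ[ℤ] L →ₗ[ℤ] ℤ) (v : L × ℤ × ℤ) : form B v (0, 0, 1) = v.2.1 := by
  simp [form]

section Isometry

variable {BL : L →ₗ[ℤ] L →ₗ[ℤ] ℤ} {BM : M →ₗ[ℤ] M →ₗ[ℤ] ℤ} {φ : (L × ℤ × ℤ) ≃ₗ[ℤ] (M × ℤ × ℤ)}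
  (hφ : ∀ v w, form BM (φ v) (φ w) = form BL v w) (hf : φ (0, 0, 1) = (0, 0, 1))
include hφ hf

theorem fst_snd_map (v : L × ℤ × ℤ) : (φ v).2.1 = v.2.1 := by
  simpa only [hf, form_f_right] using hφ v (0, 0, 1)

theorem prComp_injective : Function.Injective (prComp φ) := by
  refine (injective_iff_map_eq_zero _).mpr fun x hx => ?_
  have hφx : φ (x, 0, 0) = φ (0, 0, (φ (x, 0, 0)).2.2) := by
    rw [map_f_smul hf]
    ext
    · exact hx
    · exact fst_snd_map hφ hf _
    · rfl
  simpa using congrArg Prod.fst (φ.injective hφx)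

theorem prComp_surjective : Function.Surjective (prComp φ) := by
  intro m
  set w := φ.symm (m, 0, 0)
  have hφw : φ w = (m, 0, 0) := φ.apply_symm_apply _
  have hw : w.2.1 = 0 := by simpa [hφw] using (fst_snd_map hφ hf w).symm
  have hsplit : (w.1, (0 : ℤ), (0 : ℤ)) = w - (0, 0, w.2.2) := by
    ext <;> simp [hw]
  refine ⟨w.1, ?_⟩
  rw [prComp_apply, hsplit, map_sub, map_f_smul hf, hφw]
  simp

theorem form_prComp (x y : L) : BM (prComp φ x) (prComp φ y) = BL x y := by
  have h := hφ (x, 0, 0) (y, 0, 0)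
  have hx := fst_snd_map hφ hf (x, 0, 0)
  have hy := fst_snd_map hφ hf (y, 0, 0)
  simp only [form] at h hx hy
  simpa [hx, hy, prComp_apply] using h

end Isometry

end HyperbolicSum

open HyperbolicSum in
theorem stmt_0_general
    (L M : Type) [AddCommGroup L] [Module ℤ L] [AddCommGroup M] [Module ℤ M]
    (BL : L →ₗ[ℤ] L →ₗ[ℤ] ℤ) (BM : M →ₗ[ℤ] M →ₗ[ℤ] ℤ)
    (φ : (L × ℤ × ℤ) ≃ₗ[ℤ] (M × ℤ × ℤ))
    (hφ : ∀ x y : L × ℤ × ℤ,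
      BM (φ x).1 (φ y).1 + (φ x).2.1 * (φ y).2.2 + (φ y).2.1 * (φ x).2.2
        = BL x.1 y.1 + x.2.1 * y.2.2 + y.2.1 * x.2.2)
    (hf : φ (0, 0, 1) = (0, 0, 1)) :
    Function.Bijective (fun x : L => (φ (x, 0, 0)).1) ∧
      ∀ x y : L, BM (φ (x, 0, 0)).1 (φ (y, 0, 0)).1 = BL x y :=
  ⟨⟨prComp_injective hφ hf, prComp_surjective hφ hf⟩, form_prComp hφ hf⟩

/-- Let `L` and `M` be even lattices and `U` the hyperbolic plane with
standard basis `e, f`.  We model `L ⊕ U` as `L × ℤ × ℤ`, a vector `(x, a, b)` standing for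
`x + a·e + b·f`, with the bilinear form `B_L x y + a b' + a' b`.  If `φ : L ⊕ U ≃ M ⊕ U` is an
isometry with `φ(f) = f`, then the composition of `φ|_L` with the orthogonal projection onto
`M` is an isometry `L ≅ M`. -/
theorem stmt_0
    (L M : Type) [AddCommGroup L] [Module ℤ L] [AddCommGroup M] [Module ℤ M]
    [Module.Free ℤ L] [Module.Finite ℤ L] [Module.Free ℤ M] [Module.Finite ℤ M]
    (BL : L →ₗ[ℤ] L →ₗ[ℤ] ℤ) (BM : M →ₗ[ℤ] M →ₗ[ℤ] ℤ)
    (hLsymm : ∀ x y, BL x y = BL y x) (hMsymm : ∀ x y, BM x y = BM y x)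
    (hLeven : ∀ x, Even (BL x x)) (hMeven : ∀ x, Even (BM x x))
    (hLnd : ∀ x, (∀ y, BL x y = 0) → x = 0)
    (hMnd : ∀ x, (∀ y, BM x y = 0) → x = 0)
    (φ : (L × ℤ × ℤ) ≃ₗ[ℤ] (M × ℤ × ℤ))
    (hφ : ∀ x y : L × ℤ × ℤ,
      BM (φ x).1 (φ y).1 + (φ x).2.1 * (φ y).2.2 + (φ y).2.1 * (φ x).2.2
        = BL x.1 y.1 + x.2.1 * y.2.2 + y.2.1 * x.2.2)
    (hf : φ (0, 0, 1) = (0, 0, 1)) :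
    Function.Bijective (fun x : L => (φ (x, 0, 0)).1) ∧
      ∀ x y : L, BM (φ (x, 0, 0)).1 (φ (y, 0, 0)).1 = BL x y :=
  stmt_0_general L M BL BM φ hφ hf
end

section
/- Let L be an even lattice, l ∈ L primitive isotropic with div(l) = 1, and L = (ℤl + ℤm) ⊕ L₁ as above. For every γ ∈ O(L) fixing l and inducing the identity on L₁ modulo ℤl (i.e., γ(v') ∈ v' + ℤl for all v' ∈ L₁), there exists a unique v ∈ L₁ such that γ = T_v; in particular γ(m) = m + v − ((v,v)/2)l and γ(v') = v' − (v,v')l for v' ∈ L₁. -/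
/-!
Write `γ m = m + v + a • l` with `a = (m, γ m)`. Pairing with `l` and `m` puts `v` in
`L₁ = (ℤl + ℤm)^⊥`, and isotropy of `γ m` gives `(v, v) = -2a`. For `v' ∈ L₁` with
`γ v' = v' + c • l`, the identity `(γ m, γ v') = (m, v') = 0` forces `c = -(v, v')`.
Pairing `γ m = m + v - ((v, v) / 2) • l` with `m` recovers the coefficient of `l`, hence `v`.
-/

section HyperbolicPlane

variable {R L : Type*} [CommRing R] [AddCommGroup L] [Module R L]
  {B : L →ₗ[R] L →ₗ[R] R} {l m v : L}

theorem apply_add_add_smul_self (hsymm : ∀ x y, B x y = B y x)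
    (hl : B l l = 0) (hm : B m m = 0) (hlm : B l m = 1) (hlv : B l v = 0) (hmv : B m v = 0)
    (a : R) : B (m + v + a • l) (m + v + a • l) = B v v + 2 * a := by
  have hml : B m l = 1 := hsymm m l ▸ hlm
  simp only [map_add, map_smul, LinearMap.add_apply, LinearMap.smul_apply, smul_eq_mul,
    hsymm v m, hsymm v l, hl, hm, hlm, hml, hlv, hmv]
  ring

theorem apply_add_sub_smul_add_smul (hsymm : ∀ x y, B x y = B y x)
    (hl : B l l = 0) (hlm : B l m = 1) (hlv : B l v = 0)
    {v' : L} (hlv' : B l v' = 0) (hmv' : B m v' = 0) (d c : R) :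
    B (m + v - d • l) (v' + c • l) = B v v' + c := by
  have hml : B m l = 1 := hsymm m l ▸ hlm
  simp only [map_add, map_sub, map_smul, LinearMap.add_apply, LinearMap.sub_apply,
    LinearMap.smul_apply, smul_eq_mul, hsymm v l, hl, hml, hlv, hlv', hmv']
  ring

theorem eq_of_add_add_sub_smul_eq (hml : B m l = 1) {w : L} (hmv : B m v = 0)
    (hmw : B m w = 0) {c d : R} (h : m + w - c • l = m + v - d • l) : w = v := by
  have hcd : c = d := by
    simpa [hmv, hmw, hml] using congrArg (B m) h
  rw [add_sub_assoc, add_sub_assoc, hcd] at h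
  simpa using h

theorem apply_eq_sub_smul_of_apply_partner_eq (hsymm : ∀ x y, B x y = B y x)
    (hl : B l l = 0) (hlm : B l m = 1)
    {γ : L ≃ₗ[R] L} (hγ : ∀ x y, B (γ x) (γ y) = B x y) {v : L} (hlv : B l v = 0)
    {d : R} (hγm : γ m = m + v - d • l) {v' : L} (hlv' : B l v' = 0) (hmv' : B m v' = 0)
    {c : R} (hc : γ v' = v' + c • l) : γ v' = v' - B v v' • l := by
  have hpair := apply_add_sub_smul_add_smul hsymm hl hlm hlv hlv' hmv' d c
  rw [← hγm, ← hc, hγ, hmv'] at hpair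
  rw [hc, show c = -B v v' by linear_combination -hpair, neg_smul, sub_eq_add_neg]

end HyperbolicPlane

section Isometry

variable {L : Type*} [AddCommGroup L] {B : L →ₗ[ℤ] L →ₗ[ℤ] ℤ} {l m : L}
  {γ : L ≃ₗ[ℤ] L}

theorem exists_orthogonal_apply_partner_eq (hsymm : ∀ x y, B x y = B y x)
    (hl : B l l = 0) (hm : B m m = 0) (hlm : B l m = 1)
    (hγ : ∀ x y, B (γ x) (γ y) = B x y) (hγl : γ l = l) :
    ∃ v, (B l v = 0 ∧ B m v = 0) ∧ γ m = m + v - (B v v / 2) • l := by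
  set a := B m (γ m)
  set v := γ m - m - a • l
  have hγm : γ m = m + v + a • l := by simp only [v]; abel
  have hlγm : B l (γ m) = 1 := by simpa [hγl, hlm] using hγ l m
  have hlv : B l v = 0 := by simp [v, hlγm, hlm, hl]
  have hmv : B m v = 0 := by simp [v, a, hm, hsymm m l, hlm]
  have hvv : B v v = -2 * a := by
    have := apply_add_add_smul_self hsymm hl hm hlm hlv hmv a
    rw [← hγm, hγ, hm] at this
    linarith
  refine ⟨v, ⟨hlv, hmv⟩, ?_⟩
  rw [hvv, show -2 * a / 2 = -a by omega, neg_smul, sub_neg_eq_add, hγm]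

end Isometry

theorem stmt_8_general
    (L : Type) [AddCommGroup L] [Module ℤ L]
    (B : L →ₗ[ℤ] L →ₗ[ℤ] ℤ)
    (hsymm : ∀ x y, B x y = B y x)
    (l m : L) (hl : B l l = 0) (hm : B m m = 0) (hlm : B l m = 1)
    (γ : L ≃ₗ[ℤ] L)
    (hγ : ∀ x y, B (γ x) (γ y) = B x y) (hγl : γ l = l)
    (hγ1 : ∀ v' : L, B l v' = 0 → B m v' = 0 → ∃ c : ℤ, γ v' = v' + c • l) :
    ∃! v : L, (B l v = 0 ∧ B m v = 0) ∧
      γ m = m + v - (B v v / 2) • l ∧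
      ∀ v' : L, B l v' = 0 → B m v' = 0 → γ v' = v' - (B v v') • l := by
  -- `c • l` in the statement is `zsmul`, not the action of `‹Module ℤ L›`; the two agree since
  -- `Module ℤ L` is a subsingleton.
  obtain rfl := Subsingleton.elim ‹Module ℤ L› (AddCommGroup.toIntModule L)
  obtain ⟨v, ⟨hlv, hmv⟩, hγm⟩ := exists_orthogonal_apply_partner_eq hsymm hl hm hlm hγ hγl
  refine ⟨v, ⟨⟨hlv, hmv⟩, hγm, fun v' hlv' hmv' => ?_⟩, ?_⟩
  · obtain ⟨c, hc⟩ := hγ1 v' hlv' hmv'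
    exact apply_eq_sub_smul_of_apply_partner_eq hsymm hl hlm hγ hlv hγm hlv' hmv' hc
  · rintro w ⟨⟨-, hmw⟩, hγmw, -⟩
    exact eq_of_add_add_sub_smul_eq (hsymm m l ▸ hlm) hmv hmw (hγmw.symm.trans hγm)

/-- Let `L` be an even lattice, `l` primitive isotropic with `div(l) = 1`
(witnessed by the hyperbolic partner `m`: `(m,m) = 0`, `(l,m) = 1`), and
`L₁ = (ℤl + ℤm)^⊥`.  For every isometry `γ` of `L` fixing `l` and inducing the identity on
`L₁` modulo `ℤl` (i.e. `γ(v') ∈ v' + ℤl` for all `v' ∈ L₁`), there exists a unique `v ∈ L₁`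
with `γ = T_v`; in particular `γ(m) = m + v − ((v,v)/2)·l` and `γ(v') = v' − (v,v')·l` for
all `v' ∈ L₁`. -/
theorem stmt_8
    (L : Type) [AddCommGroup L] [Module ℤ L]
    (B : L →ₗ[ℤ] L →ₗ[ℤ] ℤ)
    (hsymm : ∀ x y, B x y = B y x) (heven : ∀ x, Even (B x x))
    (l m : L) (hl : B l l = 0) (hm : B m m = 0) (hlm : B l m = 1)
    (γ : L ≃ₗ[ℤ] L)
    (hγ : ∀ x y, B (γ x) (γ y) = B x y) (hγl : γ l = l)
    (hγ1 : ∀ v' : L, B l v' = 0 → B m v' = 0 → ∃ c : ℤ, γ v' = v' + c • l) :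
    ∃! v : L, (B l v = 0 ∧ B m v = 0) ∧
      γ m = m + v - (B v v / 2) • l ∧
      ∀ v' : L, B l v' = 0 → B m v' = 0 → γ v' = v' - (B v v') • l :=
  stmt_8_general L B hsymm l m hl hm hlm γ hγ hγl hγ1
end

section
/- Let L be an even lattice containing a primitive isotropic vector of divisor 1. If two primitive isotropic vectors l₁, l₂ ∈ L with div(l₁) = div(l₂) = 1 have isometric quotients l₁^⊥/ℤl₁ ≅ l₂^⊥/ℤl₂, then there exists an isometry γ ∈ O(L) with γ(l₁) = l₂. -/
/-!
A hyperbolic pair `(l, m)` (both isotropic, `B l m = 1`) splits `M` orthogonally as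
`R l ⊕ R m ⊕ W` with `W = {l, m}ᗮ`, via `x ↦ (B m x, B l x, x - B m x • l - B l x • m)`.
Gluing the identity on the hyperbolic planes to an isometry `ψ : W₁ ≃ W₂` therefore gives an
isometry of `M` that sends `l₁` to `l₂`.
-/

/-- All `ℤ`-module structures on an additive group agree, but not definitionally (e.g.
`Submodule.module` versus `AddCommGroup.toIntModule`); any additive equivalence is linear for
whichever of them unification asks for. -/
def AddEquiv.toIntLinearEquivOfModule {M M₂ : Type*} [AddCommGroup M] [AddCommGroup M₂]
    {_ : Module ℤ M} {_ : Module ℤ M₂} (e : M ≃+ M₂) : M ≃ₗ[ℤ] M₂ :=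
  e.toLinearEquiv fun c x => by simpa using map_intCast_smul e ℤ ℤ c x

namespace LinearMap

variable {R M : Type*} [CommRing R] [AddCommGroup M] [Module R M] {B : M →ₗ[R] M →ₗ[R] R}

structure IsHyperbolicPair (B : M →ₗ[R] M →ₗ[R] R) (l m : M) : Prop where
  left_left : B l l = 0
  right_right : B m m = 0
  left_right : B l m = 1

namespace IsHyperbolicPair

section Splitting

variable {l m : M}

theorem right_left (hB : B.IsSymm) (h : IsHyperbolicPair B l m) : B m l = 1 :=
  (hB.eq l m).symm.trans h.left_right

variable (hB : B.IsSymm) (h : IsHyperbolicPair B l m)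

def orthogonalProjection : M →ₗ[R] ↥(ker (B l) ⊓ ker (B m)) :=
  (id - (B m).smulRight l - (B l).smulRight m).codRestrict _ fun x => by
    simp [h.left_left, h.right_right, h.left_right, h.right_left hB]

theorem coe_orthogonalProjection (x : M) :
    (h.orthogonalProjection hB x : M) = x - B m x • l - B l x • m :=
  rfl

def splitting : M ≃ₗ[R] R × R × ↥(ker (B l) ⊓ ker (B m)) :=
  .ofLinearMap ((B m).prod ((B l).prod (h.orthogonalProjection hB)))
    ((toSpanSingleton R M l).coprod ((toSpanSingleton R M m).coprod (Submodule.subtype _)))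
    (LinearMap.ext fun ⟨a, b, w⟩ => by
      have hl : B l w = 0 := (Submodule.mem_inf.1 w.2).1
      have hm : B m w = 0 := (Submodule.mem_inf.1 w.2).2
      ext <;> simp [coe_orthogonalProjection, h.left_left, h.right_right, h.left_right,
        h.right_left hB, hl, hm])
    (LinearMap.ext fun x => by simp [coe_orthogonalProjection])

theorem splitting_symm_apply (a b : R) (w : ↥(ker (B l) ⊓ ker (B m))) :
    (h.splitting hB).symm (a, b, w) = a • l + b • m + w := by
  simp [splitting, add_assoc]

theorem apply_splitting_symm (a b a' b' : R) (w w' : ↥(ker (B l) ⊓ ker (B m))) :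
    B ((h.splitting hB).symm (a, b, w)) ((h.splitting hB).symm (a', b', w')) =
      a * b' + b * a' + B w w' := by
  have hl : B l w' = 0 := (Submodule.mem_inf.1 w'.2).1
  have hm : B m w' = 0 := (Submodule.mem_inf.1 w'.2).2
  have hwl : B w l = 0 := by rw [← hB.eq]; exact (Submodule.mem_inf.1 w.2).1
  have hwm : B w m = 0 := by rw [← hB.eq]; exact (Submodule.mem_inf.1 w.2).2
  simp [splitting_symm_apply, h.left_left, h.right_right, h.left_right, h.right_left hB,
    hl, hm, hwl, hwm]

end Splitting

section Extension

variable {l₁ m₁ l₂ m₂ : M} (hB : B.IsSymm) (h₁ : IsHyperbolicPair B l₁ m₁)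
  (h₂ : IsHyperbolicPair B l₂ m₂)
  (ψ : ↥(ker (B l₁) ⊓ ker (B m₁)) ≃ₗ[R] ↥(ker (B l₂) ⊓ ker (B m₂)))

def extendIsometry : M ≃ₗ[R] M :=
  (h₁.splitting hB).trans <|
    ((LinearEquiv.refl R R).prodCongr ((LinearEquiv.refl R R).prodCongr ψ)).trans
      (h₂.splitting hB).symm

theorem extendIsometry_splitting_symm (a b : R) (w : ↥(ker (B l₁) ⊓ ker (B m₁))) :
    extendIsometry hB h₁ h₂ ψ ((h₁.splitting hB).symm (a, b, w)) =
      (h₂.splitting hB).symm (a, b, ψ w) := by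
  simp [extendIsometry]

theorem extendIsometry_isometry (hψ : ∀ x y, B (ψ x : M) (ψ y : M) = B (x : M) (y : M))
    (x y : M) :
    B (extendIsometry hB h₁ h₂ ψ x) (extendIsometry hB h₁ h₂ ψ y) = B x y := by
  obtain ⟨⟨a, b, v⟩, rfl⟩ := (h₁.splitting hB).symm.surjective x
  obtain ⟨⟨a', b', w⟩, rfl⟩ := (h₁.splitting hB).symm.surjective y
  simp only [extendIsometry_splitting_symm, apply_splitting_symm, hψ]

theorem extendIsometry_left : extendIsometry hB h₁ h₂ ψ l₁ = l₂ := by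
  have hl₁ : (h₁.splitting hB).symm (1, 0, 0) = l₁ := by simp [splitting_symm_apply]
  calc extendIsometry hB h₁ h₂ ψ l₁
      = extendIsometry hB h₁ h₂ ψ ((h₁.splitting hB).symm (1, 0, 0)) := by rw [hl₁]
    _ = (h₂.splitting hB).symm (1, 0, ψ 0) := extendIsometry_splitting_symm ..
    _ = l₂ := by simp [splitting_symm_apply]

end Extension

end IsHyperbolicPair

end LinearMap

theorem stmt_10_general
    (L : Type) [AddCommGroup L] [Module ℤ L]
    (B : L →ₗ[ℤ] L →ₗ[ℤ] ℤ)
    (hsymm : ∀ x y, B x y = B y x)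
    (l₁ m₁ l₂ m₂ : L)
    (hl₁ : B l₁ l₁ = 0) (hm₁ : B m₁ m₁ = 0) (hlm₁ : B l₁ m₁ = 1)
    (hl₂ : B l₂ l₂ = 0) (hm₂ : B m₂ m₂ = 0) (hlm₂ : B l₂ m₂ = 1)
    (ψ : ↥(LinearMap.ker (B l₁) ⊓ LinearMap.ker (B m₁)) ≃ₗ[ℤ]
         ↥(LinearMap.ker (B l₂) ⊓ LinearMap.ker (B m₂)))
    (hψ : ∀ x y, B (↑(ψ x) : L) (↑(ψ y) : L) = B (x : L) (y : L)) :
    ∃ γ : L ≃ₗ[ℤ] L, (∀ x y, B (γ x) (γ y) = B x y) ∧ γ l₁ = l₂ := by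
  have hB : B.IsSymm := ⟨hsymm⟩
  have h₁ : B.IsHyperbolicPair l₁ m₁ := ⟨hl₁, hm₁, hlm₁⟩
  have h₂ : B.IsHyperbolicPair l₂ m₂ := ⟨hl₂, hm₂, hlm₂⟩
  exact ⟨_, h₁.extendIsometry_isometry hB h₂ ψ.toAddEquiv.toIntLinearEquivOfModule hψ,
    h₁.extendIsometry_left hB h₂ _⟩

/-- Let `L` be an even lattice.  If two primitive isotropic vectors
`l₁, l₂ ∈ L` of divisor `1` (witnessed by hyperbolic partners `m₁, m₂`) have isometric
quotients `l₁^⊥/ℤl₁ ≅ l₂^⊥/ℤl₂` — realised, via the hyperbolic splittings, as an isometry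
`ψ` between the orthogonal complements `(ℤl₁+ℤm₁)^⊥` and `(ℤl₂+ℤm₂)^⊥` — then there exists
an isometry `γ ∈ O(L)` with `γ(l₁) = l₂`. -/
theorem stmt_10
    (L : Type) [AddCommGroup L] [Module ℤ L] [Module.Free ℤ L] [Module.Finite ℤ L]
    (B : L →ₗ[ℤ] L →ₗ[ℤ] ℤ)
    (hsymm : ∀ x y, B x y = B y x) (heven : ∀ x, Even (B x x))
    (hnd : ∀ x, (∀ y, B x y = 0) → x = 0)
    (l₁ m₁ l₂ m₂ : L)
    (hl₁ : B l₁ l₁ = 0) (hm₁ : B m₁ m₁ = 0) (hlm₁ : B l₁ m₁ = 1)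
    (hl₂ : B l₂ l₂ = 0) (hm₂ : B m₂ m₂ = 0) (hlm₂ : B l₂ m₂ = 1)
    (ψ : ↥(LinearMap.ker (B l₁) ⊓ LinearMap.ker (B m₁)) ≃ₗ[ℤ]
         ↥(LinearMap.ker (B l₂) ⊓ LinearMap.ker (B m₂)))
    (hψ : ∀ x y, B (↑(ψ x) : L) (↑(ψ y) : L) = B (x : L) (y : L)) :
    ∃ γ : L ≃ₗ[ℤ] L, (∀ x y, B (γ x) (γ y) = B x y) ∧ γ l₁ = l₂ :=
  stmt_10_general L B hsymm l₁ m₁ l₂ m₂ hl₁ hm₁ hlm₁ hl₂ hm₂ hlm₂ ψ hψ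
end

section
/- Let L be an even lattice with at least one vector l satisfying (l,l)=0, l primitive, div(l)=1. Then the map l' ↦ [l'^⊥/ℤl'] induces a bijection between the set of O(L)-orbits of primitive isotropic vectors of divisor 1 in L and the genus 𝒢(l^⊥/ℤl) of lattices isogenus to l^⊥/ℤl, provided l^⊥/ℤl is indefinite of rank at least l(A) + 2 where l(A) is the minimal number of generators of its discriminant group (so that every lattice in the genus K satisfies K ⊕ U ≅ L). -/
/-!
A hyperbolic pair `(l, m)` splits `M` as `(Rl + Rm)^⊥ ⊕ U`. Hence isometric complements glue
with the identity of `U` to an isometry of `M` carrying one pair to the other, and a splitting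
`K ⊕ U ≅ M` exhibits `K` as the complement of the image of the standard pair of `U`.
Conversely, let an isometry `γ` move `l₁` to `l₂`. The hyperbolic partners of the isotropic
vector `l₂` are permuted transitively by the Eichler transvections fixing `l₂`, so `γ` may be
corrected to also move `m₁` to `m₂`, and then it restricts to an isometry of the complements.
-/

open LinearMap (BilinForm)

namespace LinearMap.BilinForm

variable {R M M₁ M₂ M₃ K : Type*} [CommRing R]
  [AddCommGroup M] [Module R M] [AddCommGroup M₁] [Module R M₁] [AddCommGroup M₂] [Module R M₂]
  [AddCommGroup M₃] [Module R M₃] [AddCommGroup K] [Module R K]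

def Isometric (B₁ : BilinForm R M₁) (B₂ : BilinForm R M₂) : Prop :=
  ∃ e : M₁ ≃ₗ[R] M₂, ∀ x y, B₂ (e x) (e y) = B₁ x y

theorem Isometric.symm {B₁ : BilinForm R M₁} {B₂ : BilinForm R M₂} (h : Isometric B₁ B₂) :
    Isometric B₂ B₁ := by
  obtain ⟨e, he⟩ := h
  exact ⟨e.symm, fun x y => by rw [← he, e.apply_symm_apply, e.apply_symm_apply]⟩

theorem Isometric.trans {B₁ : BilinForm R M₁} {B₂ : BilinForm R M₂} {B₃ : BilinForm R M₃}
    (h₁₂ : Isometric B₁ B₂) (h₂₃ : Isometric B₂ B₃) : Isometric B₁ B₃ := by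
  obtain ⟨e, he⟩ := h₁₂
  obtain ⟨f, hf⟩ := h₂₃
  exact ⟨e.trans f, fun x y => by simp [hf, he]⟩

/-- Over `ℤ` linearity is automatic, so this holds whatever `ℤ`-module structures the two sides
carry (a submodule has both `Submodule.module` and `AddCommGroup.toIntModule`). -/
theorem isometric_iff_exists_addEquiv {_ : Module ℤ M₁} {_ : Module ℤ M₂} {B₁ : BilinForm ℤ M₁}
    {B₂ : BilinForm ℤ M₂} : Isometric B₁ B₂ ↔ ∃ e : M₁ ≃+ M₂, ∀ x y, B₂ (e x) (e y) = B₁ x y :=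
  ⟨fun ⟨e, he⟩ => ⟨e.toAddEquiv, he⟩, fun ⟨e, he⟩ => ⟨e.toIntLinearEquiv, he⟩⟩

structure IsHyperbolicPair (B : BilinForm R M) (l m : M) : Prop where
  isotropic_left : B l l = 0
  isotropic_right : B m m = 0
  apply_left_right : B l m = 1

/-- `(Rl + Rm)^⊥`; for a hyperbolic pair it models `l^⊥ / Rl`. -/
def hyperbolicComplement (B : BilinForm R M) (l m : M) : Submodule R M :=
  LinearMap.ker (B l) ⊓ LinearMap.ker (B m)

@[simp]
theorem mem_hyperbolicComplement {B : BilinForm R M} {l m x : M} :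
    x ∈ hyperbolicComplement B l m ↔ B l x = 0 ∧ B m x = 0 :=
  Iff.rfl

/-- `BK ⊕ U`, with the hyperbolic plane `U` in the last two coordinates. -/
def hyperbolicSum (BK : BilinForm R K) : BilinForm R (K × R × R) :=
  LinearMap.mk₂ R (fun x y => BK x.1 y.1 + x.2.1 * y.2.2 + y.2.1 * x.2.2)
    (fun x x' y => by
      simp only [Prod.fst_add, Prod.snd_add, map_add, LinearMap.add_apply]; ring)
    (fun c x y => by
      simp only [Prod.smul_fst, Prod.smul_snd, map_smul, LinearMap.smul_apply, smul_eq_mul]; ring)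
    (fun x y y' => by simp only [Prod.fst_add, Prod.snd_add, map_add]; ring)
    (fun c x y => by simp only [Prod.smul_fst, Prod.smul_snd, map_smul, smul_eq_mul]; ring)

@[simp]
theorem hyperbolicSum_apply (BK : BilinForm R K) (x y : K × R × R) :
    hyperbolicSum BK x y = BK x.1 y.1 + x.2.1 * y.2.2 + y.2.1 * x.2.2 :=
  rfl

section Splitting

variable {B : BilinForm R M} {l m : M} (hB : ∀ x y, B x y = B y x) (h : IsHyperbolicPair B l m)

def hyperbolicSplitting : (hyperbolicComplement B l m × R × R) ≃ₗ[R] M where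
  toFun u := u.1 + u.2.1 • l + u.2.2 • m
  invFun x := (⟨x - B m x • l - B l x • m, by
    simp [h.isotropic_left, h.isotropic_right, h.apply_left_right, hB m l]⟩, B m x, B l x)
  map_add' u v := by simp only [Prod.fst_add, Prod.snd_add, Submodule.coe_add, add_smul]; abel
  map_smul' c u := by simp [smul_add, smul_smul]
  left_inv := by
    rintro ⟨⟨v, hv⟩, a, b⟩
    obtain ⟨hlv, hmv⟩ := mem_hyperbolicComplement.1 hv
    have hml : B m l = 1 := by rw [hB, h.apply_left_right]
    ext <;> simp [hlv, hmv, hml, h.isotropic_left, h.isotropic_right, h.apply_left_right]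
    abel
  right_inv x := by simp only; abel

@[simp]
theorem hyperbolicSplitting_apply (u : hyperbolicComplement B l m × R × R) :
    hyperbolicSplitting hB h u = u.1 + u.2.1 • l + u.2.2 • m :=
  rfl

theorem hyperbolicSplitting_isometry (u v : hyperbolicComplement B l m × R × R) :
    B (hyperbolicSplitting hB h u) (hyperbolicSplitting hB h v) =
      hyperbolicSum (B.restrict _) u v := by
  obtain ⟨⟨x, hx⟩, a, b⟩ := u
  obtain ⟨⟨y, hy⟩, c, d⟩ := v
  obtain ⟨hlx, hmx⟩ := mem_hyperbolicComplement.1 hx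
  obtain ⟨hly, hmy⟩ := mem_hyperbolicComplement.1 hy
  simp [hlx, hmx, hly, hmy, h.isotropic_left, h.isotropic_right, h.apply_left_right,
    hB m l, hB x l, hB x m]
  ring

theorem hyperbolicSplitting_symm_left : (hyperbolicSplitting hB h).symm l = (0, 1, 0) := by
  simp [LinearEquiv.symm_apply_eq]

theorem hyperbolicSplitting_symm_right : (hyperbolicSplitting hB h).symm m = (0, 0, 1) := by
  simp [LinearEquiv.symm_apply_eq]

end Splitting

theorem exists_isometry_of_isometric_hyperbolicComplement {B : BilinForm R M}
    (hB : ∀ x y, B x y = B y x) {l₁ m₁ l₂ m₂ : M}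
    (h₁ : IsHyperbolicPair B l₁ m₁) (h₂ : IsHyperbolicPair B l₂ m₂)
    (hC : Isometric (B.restrict (hyperbolicComplement B l₁ m₁))
      (B.restrict (hyperbolicComplement B l₂ m₂))) :
    ∃ γ : M ≃ₗ[R] M, (∀ x y, B (γ x) (γ y) = B x y) ∧ γ l₁ = l₂ ∧ γ m₁ = m₂ := by
  obtain ⟨ψ, hψ⟩ := hC
  set Φ₁ := hyperbolicSplitting hB h₁
  set Φ₂ := hyperbolicSplitting hB h₂
  refine ⟨Φ₁.symm.trans ((ψ.prodCongr (LinearEquiv.refl R (R × R))).trans Φ₂), ?_, ?_, ?_⟩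
  · intro x y
    obtain ⟨u, rfl⟩ := Φ₁.surjective x
    obtain ⟨v, rfl⟩ := Φ₁.surjective y
    simp only [LinearEquiv.trans_apply, LinearEquiv.symm_apply_apply, Φ₁, Φ₂,
      hyperbolicSplitting_isometry]
    simpa using hψ u.1 v.1
  · simp [Φ₁, Φ₂, hyperbolicSplitting_symm_left]
  · simp [Φ₁, Φ₂, hyperbolicSplitting_symm_right]

theorem map_hyperbolicComplement {B₁ : BilinForm R M₁} {B₂ : BilinForm R M₂} (e : M₁ ≃ₗ[R] M₂)
    (he : ∀ x y, B₂ (e x) (e y) = B₁ x y) (l m : M₁) :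
    (hyperbolicComplement B₁ l m).map (e : M₁ →ₗ[R] M₂) =
      hyperbolicComplement B₂ (e l) (e m) := by
  ext x
  rw [Submodule.mem_map_equiv, mem_hyperbolicComplement, mem_hyperbolicComplement,
    ← he l, ← he m, e.apply_symm_apply]

theorem isometric_hyperbolicComplement_map {B₁ : BilinForm R M₁} {B₂ : BilinForm R M₂}
    (e : M₁ ≃ₗ[R] M₂) (he : ∀ x y, B₂ (e x) (e y) = B₁ x y) (l m : M₁) :
    Isometric (B₁.restrict (hyperbolicComplement B₁ l m))
      (B₂.restrict (hyperbolicComplement B₂ (e l) (e m))) :=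
  ⟨e.ofSubmodules _ _ (map_hyperbolicComplement e he l m), fun x y => he x y⟩

section Eichler

variable (B : BilinForm R M)

/-- The Eichler transvection `E(l, w)`, with `c` standing for `B w w / 2` so that no division
is needed. -/
def eichlerTransvection (l w : M) (c : R) : M →ₗ[R] M :=
  LinearMap.id + (B l).smulRight w - (B w + c • B l).smulRight l

@[simp]
theorem eichlerTransvection_apply (l w : M) (c : R) (x : M) :
    eichlerTransvection B l w c x = x + B l x • w - (B w x + c * B l x) • l :=
  rfl

variable {B} {l w : M} {c : R}

theorem eichlerTransvection_isometry (hB : ∀ x y, B x y = B y x) (hl : B l l = 0)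
    (hlw : B l w = 0) (hw : B w w = 2 * c) (x y : M) :
    B (eichlerTransvection B l w c x) (eichlerTransvection B l w c y) = B x y := by
  have hwl : B w l = 0 := by rw [hB, hlw]
  simp only [eichlerTransvection_apply, map_add, map_sub, map_smul, LinearMap.add_apply,
    LinearMap.sub_apply, LinearMap.smul_apply, smul_eq_mul, hl, hlw, hwl, hw, hB x l, hB x w]
  ring

theorem eichlerTransvection_comp_neg (hB : ∀ x y, B x y = B y x) (hl : B l l = 0)
    (hlw : B l w = 0) (hw : B w w = 2 * c) :
    eichlerTransvection B l w c ∘ₗ eichlerTransvection B l (-w) c = LinearMap.id := by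
  have hwl : B w l = 0 := by rw [hB, hlw]
  ext x
  simp only [LinearMap.comp_apply, eichlerTransvection_apply, map_add, map_sub, map_smul,
    map_neg, LinearMap.neg_apply, hl, hlw, hwl, hw, LinearMap.id_apply]
  module

/-- The transvection with `w = m' - m - B m m' • l` and `c = -B m m'` fixes `l` and sends `m`
to `m'`. -/
theorem exists_isometry_fixing_of_isHyperbolicPair (hB : ∀ x y, B x y = B y x) {m m' : M}
    (h : IsHyperbolicPair B l m) (h' : IsHyperbolicPair B l m') :
    ∃ E : M ≃ₗ[R] M, (∀ x y, B (E x) (E y) = B x y) ∧ E l = l ∧ E m = m' := by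
  obtain ⟨hl, hm, hlm⟩ := h
  obtain ⟨-, hm', hlm'⟩ := h'
  set a := B m m'
  set w := m' - m - a • l
  have hml : B m l = 1 := by rw [hB, hlm]
  have hm'l : B m' l = 1 := by rw [hB, hlm']
  have hm'm : B m' m = a := hB m' m
  have hlw : B l w = 0 := by simp [w, hl, hlm, hlm']
  have hwl : B w l = 0 := by rw [hB, hlw]
  have hwm : B w m = 0 := by simp [w, hm, hm'm, hlm]
  have hw : B w w = 2 * -a := by
    simp [w, hl, hm, hm', hlm, hlm', hml, hm'l, hm'm]
    ring
  have hlw' : B l (-w) = 0 := by simp [hlw]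
  have hw' : B (-w) (-w) = 2 * -a := by simp [hw]
  refine ⟨LinearEquiv.ofLinearMap _ _ (eichlerTransvection_comp_neg hB hl hlw hw)
    (by simpa using eichlerTransvection_comp_neg hB hl hlw' hw'),
    eichlerTransvection_isometry hB hl hlw hw, ?_, ?_⟩
  · simp [hl, hwl]
  · show eichlerTransvection B l w (-a) m = m'
    simp only [eichlerTransvection_apply, hlm, hwm, one_smul]
    module

end Eichler

theorem isometric_hyperbolicComplement_of_isometry {B : BilinForm R M}
    (hB : ∀ x y, B x y = B y x) {l₁ m₁ l₂ m₂ : M}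
    (h₁ : IsHyperbolicPair B l₁ m₁) (h₂ : IsHyperbolicPair B l₂ m₂) (γ : M ≃ₗ[R] M)
    (hγ : ∀ x y, B (γ x) (γ y) = B x y) (hγl : γ l₁ = l₂) :
    Isometric (B.restrict (hyperbolicComplement B l₁ m₁))
      (B.restrict (hyperbolicComplement B l₂ m₂)) := by
  have hγh : IsHyperbolicPair B l₂ (γ m₁) := by
    rw [← hγl]
    exact ⟨(hγ _ _).trans h₁.isotropic_left, (hγ _ _).trans h₁.isotropic_right,
      (hγ _ _).trans h₁.apply_left_right⟩
  obtain ⟨E, hE, hEl, hEm⟩ := exists_isometry_fixing_of_isHyperbolicPair hB h₂ hγh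
  have hδ : ∀ x y, B (E.symm (γ x)) (E.symm (γ y)) = B x y := fun x y => by
    rw [← hγ x y, ← hE, E.apply_symm_apply, E.apply_symm_apply]
  have hδl : E.symm (γ l₁) = l₂ := by rw [hγl, E.symm_apply_eq, hEl]
  have hδm : E.symm (γ m₁) = m₂ := by rw [E.symm_apply_eq, hEm]
  have := isometric_hyperbolicComplement_map (γ.trans E.symm) hδ l₁ m₁
  rwa [LinearEquiv.trans_apply, LinearEquiv.trans_apply, hδl, hδm] at this

theorem isometric_hyperbolicComplement_iff {B : BilinForm R M}
    (hB : ∀ x y, B x y = B y x) {l₁ m₁ l₂ m₂ : M}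
    (h₁ : IsHyperbolicPair B l₁ m₁) (h₂ : IsHyperbolicPair B l₂ m₂) :
    Isometric (B.restrict (hyperbolicComplement B l₁ m₁))
        (B.restrict (hyperbolicComplement B l₂ m₂)) ↔
      ∃ γ : M ≃ₗ[R] M, (∀ x y, B (γ x) (γ y) = B x y) ∧ γ l₁ = l₂ := by
  refine ⟨fun hC => ?_, fun ⟨γ, hγ, hγl⟩ => ?_⟩
  · obtain ⟨γ, hγ, hγl, -⟩ := exists_isometry_of_isometric_hyperbolicComplement hB h₁ h₂ hC
    exact ⟨γ, hγ, hγl⟩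
  · exact isometric_hyperbolicComplement_of_isometry hB h₁ h₂ γ hγ hγl

theorem hyperbolicComplement_hyperbolicSum (BK : BilinForm R K) :
    hyperbolicComplement (hyperbolicSum BK) (0, 1, 0) (0, 0, 1) =
      LinearMap.range (LinearMap.inl R K (R × R)) := by
  ext ⟨k, a, b⟩
  simp [LinearMap.range_inl, and_comm]

theorem isometric_hyperbolicComplement_hyperbolicSum (BK : BilinForm R K) :
    Isometric BK ((hyperbolicSum BK).restrict
      (hyperbolicComplement (hyperbolicSum BK) (0, 1, 0) (0, 0, 1))) :=
  ⟨(LinearEquiv.ofInjective _ LinearMap.inl_injective).trans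
      (LinearEquiv.ofEq _ _ (hyperbolicComplement_hyperbolicSum BK).symm),
    fun x y => by simp⟩

section IsometryHyperbolicSum

variable {B : BilinForm R M} {BK : BilinForm R K} (Ψ : (K × R × R) ≃ₗ[R] M)

theorem isHyperbolicPair_of_isometry_hyperbolicSum
    (hΨ : ∀ x y, B (Ψ x) (Ψ y) = hyperbolicSum BK x y) :
    IsHyperbolicPair B (Ψ (0, 1, 0)) (Ψ (0, 0, 1)) :=
  ⟨by simp [hΨ], by simp [hΨ], by simp [hΨ]⟩

theorem isometric_hyperbolicComplement_of_isometry_hyperbolicSum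
    (hΨ : ∀ x y, B (Ψ x) (Ψ y) = hyperbolicSum BK x y) :
    Isometric (B.restrict (hyperbolicComplement B (Ψ (0, 1, 0)) (Ψ (0, 0, 1)))) BK :=
  ((isometric_hyperbolicComplement_hyperbolicSum BK).trans
    (isometric_hyperbolicComplement_map Ψ hΨ _ _)).symm

end IsometryHyperbolicSum

end LinearMap.BilinForm

open LinearMap.BilinForm

theorem stmt_11_general
    (L : Type) [AddCommGroup L] [Module ℤ L]
    (B : L →ₗ[ℤ] L →ₗ[ℤ] ℤ)
    (hsymm : ∀ x y, B x y = B y x) :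
    (∀ l₁ m₁ l₂ m₂ : L,
      B l₁ l₁ = 0 → B m₁ m₁ = 0 → B l₁ m₁ = 1 →
      B l₂ l₂ = 0 → B m₂ m₂ = 0 → B l₂ m₂ = 1 →
      ((∃ ψ : ↥(LinearMap.ker (B l₁) ⊓ LinearMap.ker (B m₁)) ≃ₗ[ℤ]
              ↥(LinearMap.ker (B l₂) ⊓ LinearMap.ker (B m₂)),
          ∀ x y, B (↑(ψ x) : L) (↑(ψ y) : L) = B (x : L) (y : L)) ↔
        (∃ γ : L ≃ₗ[ℤ] L, (∀ x y, B (γ x) (γ y) = B x y) ∧ γ l₁ = l₂))) ∧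
    (∀ (K : Type) [AddCommGroup K] [Module ℤ K] (BK : K →ₗ[ℤ] K →ₗ[ℤ] ℤ),
      (∀ x y, BK x y = BK y x) → (∀ x, Even (BK x x)) →
      (∃ Ψ : (K × ℤ × ℤ) ≃ₗ[ℤ] L,
        ∀ x y : K × ℤ × ℤ,
          B (Ψ x) (Ψ y) = BK x.1 y.1 + x.2.1 * y.2.2 + y.2.1 * x.2.2) →
      ∃ l m : L, B l l = 0 ∧ B m m = 0 ∧ B l m = 1 ∧
        ∃ ψ : ↥(LinearMap.ker (B l) ⊓ LinearMap.ker (B m)) ≃ₗ[ℤ] K,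
          ∀ x y, BK (ψ x) (ψ y) = B (x : L) (y : L)) := by
  refine ⟨fun l₁ m₁ l₂ m₂ hl₁ hm₁ hlm₁ hl₂ hm₂ hlm₂ => ?_, fun K _ _ BK _ _ hK => ?_⟩
  · have hC := isometric_iff_exists_addEquiv.symm.trans
      (isometric_hyperbolicComplement_iff hsymm ⟨hl₁, hm₁, hlm₁⟩ ⟨hl₂, hm₂, hlm₂⟩)
    exact ⟨fun ⟨ψ, hψ⟩ => hC.1 ⟨ψ.toAddEquiv, hψ⟩,
      fun hγ => let ⟨e, he⟩ := hC.2 hγ; ⟨e.toIntLinearEquiv, he⟩⟩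
  · obtain ⟨Ψ, hΨ⟩ := hK
    -- `Ψ` is linear for `AddCommGroup.toIntModule` on the product, not for `Prod.instModule`.
    obtain ⟨hl, hm, hlm⟩ :=
      isHyperbolicPair_of_isometry_hyperbolicSum Ψ.toAddEquiv.toIntLinearEquiv hΨ
    obtain ⟨ψ, hψ⟩ := isometric_iff_exists_addEquiv.1
      (isometric_hyperbolicComplement_of_isometry_hyperbolicSum Ψ.toAddEquiv.toIntLinearEquiv hΨ)
    exact ⟨_, _, hl, hm, hlm, ψ.toIntLinearEquiv, hψ⟩

/-- Let `L` be an even lattice possessing a primitive isotropic vector of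
divisor `1` (witnessed by a hyperbolic pair `l₀, m₀`).  Under the stated genus hypothesis
(every lattice `K` isogenus to `l^⊥/ℤl` satisfies `K ⊕ U ≅ L`), the genus `𝒢(l^⊥/ℤl)` is
exactly the set of isometry classes of lattices `K` with `K ⊕ U ≅ L`, and the map
`l' ↦ [l'^⊥/ℤl']` induces a bijection from the `O(L)`-orbits of primitive isotropic vectors
of divisor `1` onto it.  This is stated elementwise: (i) two such vectors have isometric
quotients (realised via hyperbolic splittings as the complements `(ℤl+ℤm)^⊥`) iff they lie in
the same `O(L)`-orbit; (ii) every even lattice `K` with `K ⊕ U ≅ L` arises as such a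
quotient. -/
theorem stmt_11
    (L : Type) [AddCommGroup L] [Module ℤ L] [Module.Free ℤ L] [Module.Finite ℤ L]
    (B : L →ₗ[ℤ] L →ₗ[ℤ] ℤ)
    (hsymm : ∀ x y, B x y = B y x) (heven : ∀ x, Even (B x x))
    (hnd : ∀ x, (∀ y, B x y = 0) → x = 0)
    (l₀ m₀ : L) (h₀ : B l₀ l₀ = 0 ∧ B m₀ m₀ = 0 ∧ B l₀ m₀ = 1) :
    (∀ l₁ m₁ l₂ m₂ : L,
      B l₁ l₁ = 0 → B m₁ m₁ = 0 → B l₁ m₁ = 1 →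
      B l₂ l₂ = 0 → B m₂ m₂ = 0 → B l₂ m₂ = 1 →
      ((∃ ψ : ↥(LinearMap.ker (B l₁) ⊓ LinearMap.ker (B m₁)) ≃ₗ[ℤ]
              ↥(LinearMap.ker (B l₂) ⊓ LinearMap.ker (B m₂)),
          ∀ x y, B (↑(ψ x) : L) (↑(ψ y) : L) = B (x : L) (y : L)) ↔
        (∃ γ : L ≃ₗ[ℤ] L, (∀ x y, B (γ x) (γ y) = B x y) ∧ γ l₁ = l₂))) ∧
    (∀ (K : Type) [AddCommGroup K] [Module ℤ K] (BK : K →ₗ[ℤ] K →ₗ[ℤ] ℤ),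
      (∀ x y, BK x y = BK y x) → (∀ x, Even (BK x x)) →
      (∃ Ψ : (K × ℤ × ℤ) ≃ₗ[ℤ] L,
        ∀ x y : K × ℤ × ℤ,
          B (Ψ x) (Ψ y) = BK x.1 y.1 + x.2.1 * y.2.2 + y.2.1 * x.2.2) →
      ∃ l m : L, B l l = 0 ∧ B m m = 0 ∧ B l m = 1 ∧
        ∃ ψ : ↥(LinearMap.ker (B l) ⊓ LinearMap.ker (B m)) ≃ₗ[ℤ] K,
          ∀ x y, BK (ψ x) (ψ y) = B (x : L) (y : L)) :=
  stmt_11_general L B hsymm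
end

section
/- Let p be a prime and e ≥ 1. The group O(A_{U(p^e)}) of isometries of the discriminant form of U(p^e) consists exactly of the matrices diag(a, a⁻¹) and antidiag(b, b⁻¹) for a, b ∈ (ℤ/p^eℤ)^×; in particular |O(A_{U(p^e)})| = 2·φ(p^e), where φ is Euler's totient function. -/
/-!
Since `ℤ/p^e` is a local ring, `ad + bc = 1` forces `ad` or `bc` to be a unit. If `ad` is a
unit then so are `a` and `d`, and `ab = cd = 0` kill `b` and `c`, leaving `diag(a, a⁻¹)`;
symmetrically a unit `bc` gives `antidiag(b, b⁻¹)`. These two families are disjoint copies of the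
unit group, hence `2·φ(p^e)` isometries.
-/

theorem ZMod.isLocalRing_prime_pow {p : ℕ} (hp : p.Prime) {e : ℕ} (he : e ≠ 0) :
    IsLocalRing (ZMod (p ^ e)) :=
  haveI : Fact p.Prime := ⟨hp⟩
  haveI : Nontrivial (ZMod (p ^ e)) :=
    ZMod.nontrivial_iff.mpr (Nat.one_lt_pow he hp.one_lt).ne'
  IsLocalRing.of_surjective (PadicInt.toZModPow e) (ZMod.ringHom_surjective _)

theorem IsLocalRing.hyperbolic_isometry_iff {R : Type*} [CommRing R] [IsLocalRing R]
    (a b c d : R) :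
    (a * d + b * c = 1 ∧ a * b = 0 ∧ c * d = 0 ∧ IsUnit (a * d - b * c)) ↔
      ((b = 0 ∧ c = 0 ∧ a * d = 1) ∨ (a = 0 ∧ d = 0 ∧ b * c = 1)) := by
  constructor
  · rintro ⟨hsum, hab, hcd, -⟩
    rcases IsLocalRing.isUnit_or_isUnit_of_add_one hsum with had | hbc
    · obtain ⟨ha, hd⟩ := IsUnit.mul_iff.mp had
      have hb : b = 0 := ha.mul_right_eq_zero.mp hab
      have hc : c = 0 := hd.mul_left_eq_zero.mp hcd
      exact Or.inl ⟨hb, hc, by simpa [hb, hc] using hsum⟩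
    · obtain ⟨hb, hc⟩ := IsUnit.mul_iff.mp hbc
      have ha : a = 0 := hb.mul_left_eq_zero.mp hab
      have hd : d = 0 := hc.mul_right_eq_zero.mp hcd
      exact Or.inr ⟨ha, hd, by simpa [ha, hd] using hsum⟩
  · rintro (⟨rfl, rfl, had⟩ | ⟨rfl, rfl, hbc⟩)
    · simp [had]
    · simp [hbc]

section DiagAntidiag

variable {R : Type*} [CommRing R]

def diagAntidiag : Rˣ ⊕ Rˣ → R × R × R × R :=
  Sum.elim (fun u => (u, 0, 0, ↑u⁻¹)) (fun u => (0, u, ↑u⁻¹, 0))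

theorem range_diagAntidiag :
    Set.range (diagAntidiag (R := R)) =
      {q | (q.2.1 = 0 ∧ q.2.2.1 = 0 ∧ q.1 * q.2.2.2 = 1) ∨
        (q.1 = 0 ∧ q.2.2.2 = 0 ∧ q.2.1 * q.2.2.1 = 1)} := by
  ext ⟨a, b, c, d⟩
  constructor
  · rintro ⟨u | u, hu⟩ <;> simp only [diagAntidiag, Sum.elim_inl, Sum.elim_inr,
      Prod.mk.injEq] at hu <;> obtain ⟨rfl, rfl, rfl, rfl⟩ := hu <;> simp
  · rintro (⟨rfl, rfl, had⟩ | ⟨rfl, rfl, hbc⟩)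
    · exact ⟨.inl ⟨a, d, had, by rwa [mul_comm]⟩, rfl⟩
    · exact ⟨.inr ⟨b, c, hbc, by rwa [mul_comm]⟩, rfl⟩

theorem diagAntidiag_injective [Nontrivial R] : Function.Injective (diagAntidiag (R := R)) := by
  rintro (u | u) (v | v) h <;> simp only [diagAntidiag, Sum.elim_inl, Sum.elim_inr,
    Prod.mk.injEq] at h
  · exact congrArg Sum.inl (Units.ext h.1)
  · exact absurd h.1 u.ne_zero
  · exact absurd h.1.symm v.ne_zero
  · exact congrArg Sum.inr (Units.ext h.2.1)

theorem card_diag_or_antidiag [Nontrivial R] :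
    Nat.card {q : R × R × R × R // (q.2.1 = 0 ∧ q.2.2.1 = 0 ∧ q.1 * q.2.2.2 = 1) ∨
        (q.1 = 0 ∧ q.2.2.2 = 0 ∧ q.2.1 * q.2.2.1 = 1)} = 2 * Nat.card Rˣ := by
  rw [← Set.coe_ofPred, ← range_diagAntidiag,
    Nat.card_range_of_injective diagAntidiag_injective,
    ← Nat.card_congr (Equiv.boolProdEquivSum Rˣ), Nat.card_prod,
    Nat.card_eq_fintype_card (α := Bool), Fintype.card_bool]

end DiagAntidiag

/-- Let `p` be a prime and `e ≥ 1`.  In matrix form with respect to the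
basis `{l/n, m/n}` of `A_{U(n)}` (`n = p^e`), the group `O(A_{U(p^e)})` is
`{(a b; c d) ∈ GL₂(ℤ/p^e) : ad + bc = 1, ab = 0, cd = 0}`.  It consists exactly of the
matrices `diag(a, a⁻¹)` and `antidiag(b, b⁻¹)` with `a, b ∈ (ℤ/p^e)^×`; in particular its
order is `2·φ(p^e)`.  (A quadruple `(a, b, c, d)` encodes the matrix `(a b; c d)`.) -/
theorem stmt_13 (p : ℕ) (hp : p.Prime) (e : ℕ) (he : 1 ≤ e) :
    (∀ a b c d : ZMod (p ^ e),
      (a * d + b * c = 1 ∧ a * b = 0 ∧ c * d = 0 ∧ IsUnit (a * d - b * c)) ↔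
        ((b = 0 ∧ c = 0 ∧ a * d = 1) ∨ (a = 0 ∧ d = 0 ∧ b * c = 1))) ∧
    Nat.card {q : ZMod (p ^ e) × ZMod (p ^ e) × ZMod (p ^ e) × ZMod (p ^ e) //
        q.1 * q.2.2.2 + q.2.1 * q.2.2.1 = 1 ∧ q.1 * q.2.1 = 0 ∧
        q.2.2.1 * q.2.2.2 = 0 ∧ IsUnit (q.1 * q.2.2.2 - q.2.1 * q.2.2.1)}
      = 2 * Nat.totient (p ^ e) := by
  have := ZMod.isLocalRing_prime_pow hp (by omega : e ≠ 0)
  have : NeZero (p ^ e) := ⟨pow_ne_zero e hp.ne_zero⟩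
  refine ⟨IsLocalRing.hyperbolic_isometry_iff, ?_⟩
  rw [Nat.card_congr
      (Equiv.subtypeEquivRight fun _ => IsLocalRing.hyperbolic_isometry_iff _ _ _ _),
    card_diag_or_antidiag, Nat.card_eq_fintype_card, ZMod.card_units_eq_totient]
end

section
/- Let r ≥ 2 with prime factorization r = ∏ᵢ pᵢ^{eᵢ} (τ(r) distinct primes). Then O(A_{U(r)}) ≅ ∏ᵢ O(A_{U(pᵢ^{eᵢ})}), and hence |O(A_{U(r)})| = 2^{τ(r)}·φ(r). -/
/-!
Matrices over a product of rings satisfy the defining equations of `O(A_{U(r)})` iff each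
component does, so the Chinese remainder theorem `ℤ/r ≅ ∏ ℤ/pᵢ^{eᵢ}` splits the group
componentwise. Over a local ring such as `ℤ/p^e`, the relations `ad + bc = 1` and `ab = cd = 0`
make `ad` idempotent, hence `0` or `1`: every element is `diag(u, u⁻¹)` or
`antidiag(u, u⁻¹)` for a unit `u`, which gives `2 φ(p^e)` elements.
-/

/-- The group `O(A_{U(n)})` in matrix form: `2×2` matrices over `ℤ/n` in `GL₂` satisfying
`ad + bc = 1`, `ab = 0`, `cd = 0`. -/
def discIsomSet (n : ℕ) : Type :=
  {A : Matrix (Fin 2) (Fin 2) (ZMod n) //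
    A 0 0 * A 1 1 + A 0 1 * A 1 0 = 1 ∧ A 0 0 * A 0 1 = 0 ∧ A 1 0 * A 1 1 = 0 ∧
    IsUnit (A 0 0 * A 1 1 - A 0 1 * A 1 0)}

variable {R S : Type*} [CommRing R] [CommRing S]

def IsDiscIsom (A : Matrix (Fin 2) (Fin 2) R) : Prop :=
  A 0 0 * A 1 1 + A 0 1 * A 1 0 = 1 ∧ A 0 0 * A 0 1 = 0 ∧ A 1 0 * A 1 1 = 0 ∧
    IsUnit (A 0 0 * A 1 1 - A 0 1 * A 1 0)

variable (R) in
def DiscIsom : Type _ := {A : Matrix (Fin 2) (Fin 2) R // IsDiscIsom A}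

theorem IsDiscIsom.map (f : R →+* S) {A : Matrix (Fin 2) (Fin 2) R} (h : IsDiscIsom A) :
    IsDiscIsom (A.map f) := by
  obtain ⟨h₁, h₂, h₃, h₄⟩ := h
  simp only [IsDiscIsom, Matrix.map_apply, ← map_mul, ← map_add, ← map_sub, h₁, h₂, h₃,
    map_one, map_zero, true_and]
  exact h₄.map f

def DiscIsom.congr (f : R ≃+* S) : DiscIsom R ≃ DiscIsom S where
  toFun A := ⟨A.1.map f, A.2.map (f : R →+* S)⟩
  invFun A := ⟨A.1.map f.symm, A.2.map (f.symm : S →+* R)⟩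
  left_inv A := Subtype.ext <| by ext; simp
  right_inv A := Subtype.ext <| by ext; simp

theorem isDiscIsom_pi_iff {ι : Type*} {R : ι → Type*} [∀ i, CommRing (R i)]
    {A : Matrix (Fin 2) (Fin 2) (∀ i, R i)} :
    IsDiscIsom A ↔ ∀ i, IsDiscIsom (A.map fun x => x i) := by
  simp only [IsDiscIsom, Pi.isUnit_iff, funext_iff, Matrix.map_apply, Pi.add_apply,
    Pi.mul_apply, Pi.sub_apply, Pi.one_apply, Pi.zero_apply, forall_and]

def DiscIsom.piEquiv {ι : Type*} (R : ι → Type*) [∀ i, CommRing (R i)] :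
    DiscIsom (∀ i, R i) ≃ ∀ i, DiscIsom (R i) where
  toFun A i := ⟨A.1.map fun x => x i, isDiscIsom_pi_iff.mp A.2 i⟩
  invFun B := ⟨Matrix.of fun j k i => (B i).1 j k, isDiscIsom_pi_iff.mpr fun i => (B i).2⟩
  left_inv _ := rfl
  right_inv _ := rfl

theorem IsIdempotentElem.eq_zero_or_eq_one_of_isLocalRing [IsLocalRing R] {e : R}
    (he : IsIdempotentElem e) : e = 0 ∨ e = 1 := by
  have hmul : e * (1 - e) = 0 := by rw [mul_sub, mul_one, he.eq, sub_self]
  rcases IsLocalRing.isUnit_or_isUnit_one_sub_self e with hu | hu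
  · exact .inr (sub_eq_zero.mp ((hu.mul_right_eq_zero).mp hmul)).symm
  · exact .inl ((hu.mul_left_eq_zero).mp hmul)

theorem IsDiscIsom.diagonal_or_antidiagonal [IsLocalRing R] {A : Matrix (Fin 2) (Fin 2) R}
    (hA : IsDiscIsom A) :
    (A 0 1 = 0 ∧ A 1 0 = 0 ∧ A 0 0 * A 1 1 = 1) ∨
      (A 0 0 = 0 ∧ A 1 1 = 0 ∧ A 0 1 * A 1 0 = 1) := by
  obtain ⟨h₁, h₂, h₃, -⟩ := hA
  have hidem : IsIdempotentElem (A 0 0 * A 1 1) := by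
    unfold IsIdempotentElem
    linear_combination (A 0 0 * A 1 1) * h₁ - A 1 0 * A 1 1 * h₂
  rcases hidem.eq_zero_or_eq_one_of_isLocalRing with h | h
  · right
    refine ⟨?_, ?_, ?_⟩
    · linear_combination (-A 0 0) * h₁ + A 1 0 * h₂ + A 0 0 * h
    · linear_combination (-A 1 1) * h₁ + A 0 1 * h₃ + A 1 1 * h
    · linear_combination h₁ - h
  · left
    refine ⟨?_, ?_, h⟩
    · linear_combination A 1 1 * h₂ - A 0 1 * h
    · linear_combination A 0 0 * h₃ - A 1 0 * h

namespace DiscIsom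

def diag (u : Rˣ) : DiscIsom R :=
  ⟨!![(u : R), 0; 0, ↑u⁻¹], by simp [IsDiscIsom]⟩

def antidiag (u : Rˣ) : DiscIsom R :=
  ⟨!![0, (u : R); ↑u⁻¹, 0], by simp [IsDiscIsom]⟩

theorem bijective_sumElim_diag_antidiag [IsLocalRing R] :
    Function.Bijective (Sum.elim (diag (R := R)) antidiag) := by
  refine ⟨?_, ?_⟩
  · rintro (u | u) (v | v) h <;>
      have h₀₀ := congrArg (fun A : DiscIsom R => A.1 0 0) h <;>
      have h₀₁ := congrArg (fun A : DiscIsom R => A.1 0 1) h <;>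
      simp only [Sum.elim_inl, Sum.elim_inr, diag, antidiag, Matrix.of_apply, Matrix.cons_val',
        Matrix.cons_val_zero, Matrix.cons_val_one, Matrix.cons_val_fin_one, Units.ne_zero]
        at h₀₀ h₀₁
    · exact congrArg _ (Units.ext h₀₀)
    · exact congrArg _ (Units.ext h₀₁)
  · rintro ⟨A, hA⟩
    rcases hA.diagonal_or_antidiagonal with ⟨hb, hc, had⟩ | ⟨ha, hd, hbc⟩
    · refine ⟨.inl ⟨A 0 0, A 1 1, had, (mul_comm _ _).trans had⟩, Subtype.ext ?_⟩
      ext i j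
      fin_cases i <;> fin_cases j <;> simp [diag, hb, hc]
    · refine ⟨.inr ⟨A 0 1, A 1 0, hbc, (mul_comm _ _).trans hbc⟩, Subtype.ext ?_⟩
      ext i j
      fin_cases i <;> fin_cases j <;> simp [antidiag, ha, hd]

theorem card_eq [IsLocalRing R] [Finite R] : Nat.card (DiscIsom R) = 2 * Nat.card Rˣ := by
  rw [← Nat.card_congr (Equiv.ofBijective _ bijective_sumElim_diag_antidiag), Nat.card_sum,
    two_mul]

end DiscIsom

theorem ZMod.isLocalRing_pow {p : ℕ} [Fact p.Prime] {e : ℕ} (he : e ≠ 0) :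
    IsLocalRing (ZMod (p ^ e)) :=
  have : Nontrivial (ZMod (p ^ e)) :=
    ZMod.nontrivial_iff.mpr (Nat.one_lt_pow he (Fact.out : p.Prime).one_lt).ne'
  .of_surjective' (PadicInt.toZModPow e) (ZMod.ringHom_surjective _)

theorem card_discIsomSet_pow {p e : ℕ} (hp : p.Prime) (he : e ≠ 0) :
    Nat.card (discIsomSet (p ^ e)) = 2 * (p ^ e).totient := by
  have : Fact p.Prime := ⟨hp⟩
  have : NeZero (p ^ e) := ⟨pow_ne_zero e hp.ne_zero⟩
  have := ZMod.isLocalRing_pow (p := p) he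
  rw [← ZMod.card_units_eq_totient, ← Nat.card_eq_fintype_card]
  exact DiscIsom.card_eq

theorem Nat.totient_eq_prod_primeFactors_pow {n : ℕ} (hn : n ≠ 0) :
    n.totient = ∏ p : n.primeFactors, ((p : ℕ) ^ n.factorization p).totient := by
  rw [Nat.multiplicative_factorization _ (fun _ _ => Nat.totient_mul) Nat.totient_one hn]
  exact (Finset.prod_coe_sort n.primeFactors fun p => (p ^ n.factorization p).totient).symm

/-- Let `r ≥ 2` with `τ(r)` distinct prime factors.  Then
`O(A_{U(r)}) ≅ ∏ᵢ O(A_{U(pᵢ^{eᵢ})})` (via the Chinese Remainder Theorem applied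
componentwise), and hence `|O(A_{U(r)})| = 2^{τ(r)}·φ(r)`. -/
theorem stmt_14 (r : ℕ) (hr : 2 ≤ r) :
    Nonempty (discIsomSet r ≃
      ((p : r.primeFactors) → discIsomSet ((p : ℕ) ^ r.factorization (p : ℕ)))) ∧
    Nat.card (discIsomSet r) = 2 ^ r.primeFactors.card * Nat.totient r := by
  have hr₀ : r ≠ 0 := by omega
  let E : discIsomSet r ≃ ∀ p : r.primeFactors, discIsomSet ((p : ℕ) ^ r.factorization p) :=
    (DiscIsom.congr (ZMod.equivPi r hr₀)).trans (DiscIsom.piEquiv _)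
  refine ⟨⟨E⟩, ?_⟩
  have hfactor (p : r.primeFactors) :
      Nat.card (discIsomSet ((p : ℕ) ^ r.factorization p)) =
        2 * ((p : ℕ) ^ r.factorization p).totient :=
    card_discIsomSet_pow (Nat.prime_of_mem_primeFactors p.2) (Finsupp.mem_support_iff.mp p.2)
  rw [Nat.card_congr E, Nat.card_pi, Finset.prod_congr rfl fun p _ => hfactor p,
    Finset.prod_mul_distrib, Finset.prod_const, Finset.card_univ, Fintype.card_coe,
    Nat.totient_eq_prod_primeFactors_pow hr₀]
end

section
/- Let r > 2 and let L be an even lattice of signature (1,1) with discriminant form isometric to that of U(r). Then L ≅ U(r). Equivalently, the genus of U(r) contains a single isometry class. -/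
/-!
Let `e, f` be the basis of `ℚL` dual to `l₀, m₀` and `D = det Gram(l₀, m₀) < 0`, so that
`det Gram(e, f) = 1 / D`. Since `L^∨ = ℤx + ℤy + L` is finitely generated over `ℤ`, it contains no
line `ℚv` orthogonal to `L`, which forces `x, y ∈ ℚL`. Every vector of `L^∨` has `r · q` in `2ℤ`,
so `r · Gram(e, f)` is an even integral matrix and `r² / D` is an integer. On the other hand
`det Gram(x, y) · D = Φ²`, with `Φ ∈ ℤ` the determinant of the pairing of `x, y` with `l₀, m₀`,
and `r² det Gram(x, y) ≡ -1 (mod r)`. Thus `r² / D` divides both `r²` and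
`(r² / D) Φ² = r² det Gram(x, y)`, which are coprime, and `D = -r²`. Then `Gram(l₀, m₀) = r G'`
with `G'` even of determinant `-1`: the quadratic form of `G'` has discriminant `1`, so it is the
product of two integral linear forms of determinant one, and the basis dual to these forms is
hyperbolic.
-/

open Submodule

theorem Int.exists_hyperbolic_factorization {A Q C : ℤ} (h : Q ^ 2 - 4 * A * C = 1) :
    ∃ α β γ δ : ℤ, α * δ - β * γ = 1 ∧ A = α * γ ∧ Q = α * δ + β * γ ∧ C = β * δ := by
  rcases eq_or_ne A 0 with rfl | hA
  · have : (Q - 1) * (Q + 1) = 0 := by linear_combination h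
    rcases mul_eq_zero.mp this with hQ | hQ
    · exact ⟨1, C, 0, 1, by ring, by ring, by linear_combination hQ, by ring⟩
    · exact ⟨0, 1, -1, C, by ring, by ring, by linear_combination hQ, by ring⟩
  obtain ⟨g, rfl⟩ : Odd Q := (Int.odd_pow' two_ne_zero).mp ⟨2 * A * C, by linear_combination h⟩
  have hg : g * (g + 1) = A * C := by linarith
  obtain ⟨γ, α, ⟨β, rfl⟩, ⟨δ, hδ⟩, rfl⟩ : ∃ γ α, γ ∣ g ∧ α ∣ g + 1 ∧ A = γ * α :=
    exists_dvd_and_dvd_of_dvd_mul ⟨C, hg⟩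
  refine ⟨α, β, γ, δ, by linear_combination -hδ, by ring, by linear_combination hδ, ?_⟩
  exact mul_left_cancel₀ hA (by linear_combination -hg + γ * β * hδ)

theorem Rat.eq_zero_of_forall_mul_mem_zspan_pair {p q : ℚ}
    (h : ∀ t : ℚ, ∃ a b : ℤ, t * p = a * p + b * q) : p = 0 := by
  by_contra hp
  -- `a p + b q` has denominator dividing `p.den * q.den`, which `1 / (2 p.den q.den)` does not.
  obtain ⟨a, b, hab⟩ := h (1 / (2 * (p.den * q.den) * p))
  have hpd : (p.den : ℚ) ≠ 0 := by positivity
  have hqd : (q.den : ℚ) ≠ 0 := by positivity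
  have : ((1 : ℤ) : ℚ) = ((2 * (a * p.num * q.den + b * q.num * p.den) : ℤ) : ℚ) := by
    push_cast
    rw [← p.mul_den_eq_num, ← q.mul_den_eq_num]
    field_simp at hab
    linear_combination hab
  have := Int.cast_injective this
  omega

theorem eq_neg_sq_of_gramDet_relations {r : ℕ} {D Gx Ge : ℚ} (hD : D < 0)
    (hDint : ∃ n : ℤ, D = n) (hGe : Ge * D = 1) (hGx : ∃ Φ : ℤ, Gx * D = Φ ^ 2)
    (hGeint : ∃ n : ℤ, r ^ 2 * Ge = n) (hGxint : ∃ k : ℤ, r ^ 2 * Gx = r * k - 1) :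
    D = -r ^ 2 := by
  obtain ⟨d, rfl⟩ := hDint
  obtain ⟨Φ, hΦ⟩ := hGx
  obtain ⟨u, hu⟩ := hGeint
  obtain ⟨k, hk⟩ := hGxint
  have hud : u * d = (r : ℤ) ^ 2 := by
    exact_mod_cast (by linear_combination (r : ℚ) ^ 2 * hGe - d * hu : (u : ℚ) * d = r ^ 2)
  have huΦ : r * k - 1 = u * Φ ^ 2 := by
    have : (r * k - 1 : ℚ) = u * Φ ^ 2 := calc
      (r * k - 1 : ℚ) = r ^ 2 * Gx * (Ge * d) := by rw [hGe, mul_one, hk]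
      _ = (r ^ 2 * Ge) * (Gx * d) := by ring
      _ = u * Φ ^ 2 := by rw [hu, hΦ]
    exact_mod_cast this
  have hcop : IsCoprime ((r : ℤ) ^ 2) (r * k - 1) :=
    (show IsCoprime (r : ℤ) (r * k - 1) from ⟨k, -1, by ring⟩).pow_left
  have hd : d < 0 := by exact_mod_cast hD
  rcases Int.isUnit_iff.mp (hcop.isUnit_of_dvd' ⟨d, hud.symm⟩ ⟨Φ ^ 2, huΦ⟩) with rfl | rfl
  · linarith [sq_nonneg (r : ℤ)]
  · have : d = -(r : ℤ) ^ 2 := by linarith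
    rw [this]; push_cast; ring

theorem Submodule.span_pair_eq_of_det_eq_one {R M : Type*} [CommRing R] [AddCommGroup M]
    [Module R M] {l m : M} {α β γ δ : R} (h : α * δ - β * γ = 1) :
    span R {l, m} = span R {δ • l - γ • m, α • m - β • l} := by
  apply le_antisymm <;> rw [span_le, Set.insert_subset_iff, Set.singleton_subset_iff] <;>
    refine ⟨mem_span_pair.mpr ?_, mem_span_pair.mpr ?_⟩
  · exact ⟨α, γ, by linear_combination (norm := module) h • l⟩
  · exact ⟨β, δ, by linear_combination (norm := module) h • m⟩
  · exact ⟨δ, -γ, by module⟩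
  · exact ⟨-β, α, by module⟩

section

variable {V : Type*} [AddCommGroup V] [Module ℚ V]

theorem Submodule.mem_of_forall_smul_sub_mem {S : Submodule ℚ V} {x y s : V} (hs : s ∈ S)
    (h : ∀ t : ℚ, ∃ a b : ℤ, t • (x - s) - (a • x + b • y) ∈ S) : x ∈ S := by
  by_contra hx
  obtain ⟨f, hfx, hSf⟩ := S.exists_le_ker_of_notMem hx
  refine hfx (Rat.eq_zero_of_forall_mul_mem_zspan_pair (q := f y) fun t => ?_)
  obtain ⟨a, b, hab⟩ := h t
  have hfs : f s = 0 := hSf hs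
  have := hSf hab
  simp only [LinearMap.mem_ker, map_sub, map_add, map_smul, map_zsmul, hfs, smul_eq_mul,
    zsmul_eq_mul] at this
  exact ⟨a, b, by linear_combination this⟩

variable (B : V →ₗ[ℚ] V →ₗ[ℚ] ℚ)

def gramDet (v w : V) : ℚ := B v v * B w w - B v w * B v w

def dualLattice (L : Submodule ℤ V) : Set V := {w | ∀ z ∈ L, ∃ n : ℤ, B w z = n}

variable {B}

theorem gramDet_mul_gramDet (hB : ∀ u v, B u v = B v u) {l m x y : V}
    (hx : x ∈ span ℚ {l, m}) (hy : y ∈ span ℚ {l, m}) :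
    gramDet B x y * gramDet B l m = (B x l * B y m - B x m * B y l) ^ 2 := by
  obtain ⟨a, b, rfl⟩ := mem_span_pair.mp hx
  obtain ⟨c, d, rfl⟩ := mem_span_pair.mp hy
  simp only [gramDet, map_add, map_smul, LinearMap.add_apply, LinearMap.smul_apply, smul_eq_mul,
    hB m l]
  ring

theorem exists_dual_pair (hB : ∀ u v, B u v = B v u) {l m : V} (hD : gramDet B l m ≠ 0) :
    ∃ e f : V, e ∈ span ℚ {l, m} ∧ f ∈ span ℚ {l, m} ∧
      B e l = 1 ∧ B e m = 0 ∧ B f l = 0 ∧ B f m = 1 ∧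
      B e e * gramDet B l m = B m m ∧ B f f * gramDet B l m = B l l ∧
      B e f * gramDet B l m = -B l m := by
  set D := gramDet B l m with hD_def
  refine ⟨(B m m / D) • l + (-(B l m / D)) • m, (-(B l m / D)) • l + (B l l / D) • m,
    mem_span_pair.mpr ⟨_, _, rfl⟩, mem_span_pair.mpr ⟨_, _, rfl⟩, ?_⟩
  simp only [map_add, map_smul, LinearMap.add_apply, LinearMap.smul_apply, smul_eq_mul, hB m l]
  rw [gramDet] at hD_def
  refine ⟨?_, ?_, ?_, ?_, ?_, ?_, ?_⟩ <;> field_simp <;> rw [hD_def] <;> ring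

theorem mem_dualLattice_span_pair {l m w : V} (hl : ∃ n : ℤ, B w l = n)
    (hm : ∃ n : ℤ, B w m = n) : w ∈ dualLattice B (span ℤ {l, m}) := by
  intro z hz
  obtain ⟨a, b, rfl⟩ := mem_span_pair.mp hz
  obtain ⟨i, hi⟩ := hl
  obtain ⟨j, hj⟩ := hm
  exact ⟨a * i + b * j, by simp [map_zsmul, hi, hj]⟩

theorem add_mem_dualLattice {L : Submodule ℤ V} {w w' : V} (hw : w ∈ dualLattice B L)
    (hw' : w' ∈ dualLattice B L) : w + w' ∈ dualLattice B L := by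
  intro z hz
  obtain ⟨i, hi⟩ := hw z hz
  obtain ⟨j, hj⟩ := hw' z hz
  exact ⟨i + j, by simp [hi, hj]⟩

theorem mem_span_rat_of_dualLattice_subset {l₀ m₀ e f x y : V}
    (he : e ∈ span ℚ {l₀, m₀}) (hf : f ∈ span ℚ {l₀, m₀})
    (hel : B e l₀ = 1) (hem : B e m₀ = 0) (hfl : B f l₀ = 0) (hfm : B f m₀ = 1)
    (hgen : ∀ w ∈ dualLattice B (span ℤ {l₀, m₀}),
      ∃ (a b : ℤ) (u : V), u ∈ span ℤ {l₀, m₀} ∧ w = a • x + b • y + u) :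
    x ∈ span ℚ {l₀, m₀} ∧ y ∈ span ℚ {l₀, m₀} := by
  set proj : V → V := fun v => B v l₀ • e + B v m₀ • f
  have hproj : ∀ v, proj v ∈ span ℚ {l₀, m₀} := fun v =>
    add_mem (smul_mem _ _ he) (smul_mem _ _ hf)
  -- `v - proj v` is orthogonal to `l₀, m₀`, so all its rational multiples lie in the dual lattice.
  have key : ∀ v : V, ∀ t : ℚ,
      ∃ a b : ℤ, t • (v - proj v) - (a • x + b • y) ∈ span ℚ {l₀, m₀} := by
    intro v t
    obtain ⟨a, b, u, hu, hw⟩ := hgen (t • (v - proj v)) (mem_dualLattice_span_pair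
      ⟨0, by simp [proj, hel, hfl]⟩ ⟨0, by simp [proj, hem, hfm]⟩)
    exact ⟨a, b, by rw [hw, add_sub_cancel_left]; exact span_le_restrictScalars ℤ ℚ _ hu⟩
  refine ⟨mem_of_forall_smul_sub_mem (hproj x) (key x),
    mem_of_forall_smul_sub_mem (y := x) (hproj y) fun t => ?_⟩
  obtain ⟨a, b, h⟩ := key y t
  exact ⟨b, a, by rwa [add_comm (b • y)]⟩

theorem exists_mul_apply_self_eq_two_mul_of_mem_dualLattice (hB : ∀ u v, B u v = B v u)
    {L : Submodule ℤ V} {r : ℕ} (hr : (r : ℚ) ≠ 0) {x y : V}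
    (hx : x ∈ dualLattice B L) (hy : y ∈ dualLattice B L)
    (heven : ∀ z ∈ L, ∃ n : ℤ, B z z = 2 * n) (hqx : ∃ n : ℤ, B x x = 2 * n)
    (hqy : ∃ n : ℤ, B y y = 2 * n) (hbxy : ∃ n : ℤ, B x y = 1 / r + n)
    (hgen : ∀ w ∈ dualLattice B L, ∃ (a b : ℤ) (u : V), u ∈ L ∧ w = a • x + b • y + u)
    {w : V} (hw : w ∈ dualLattice B L) : ∃ n : ℤ, r * B w w = 2 * n := by
  obtain ⟨a, b, u, hu, rfl⟩ := hgen w hw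
  obtain ⟨nx, hnx⟩ := hqx
  obtain ⟨ny, hny⟩ := hqy
  obtain ⟨nb, hnb⟩ := hbxy
  obtain ⟨kx, hkx⟩ := hx u hu
  obtain ⟨ky, hky⟩ := hy u hu
  obtain ⟨nu, hnu⟩ := heven u hu
  refine ⟨r * (a ^ 2 * nx + a * b * nb + b ^ 2 * ny + a * kx + b * ky + nu) + a * b, ?_⟩
  simp only [map_add, map_zsmul, LinearMap.add_apply, LinearMap.smul_apply, zsmul_eq_mul,
    hB y x, hB u x, hB u y, hnx, hny, hnb, hkx, hky, hnu]
  field_simp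
  push_cast
  ring

theorem exists_mul_apply_eq_of_even (hB : ∀ u v, B u v = B v u) {c : ℚ} {w w' : V}
    (h : ∃ n : ℤ, c * B w w = 2 * n) (h' : ∃ n : ℤ, c * B w' w' = 2 * n)
    (h'' : ∃ n : ℤ, c * B (w + w') (w + w') = 2 * n) : ∃ n : ℤ, c * B w w' = n := by
  obtain ⟨i, hi⟩ := h
  obtain ⟨j, hj⟩ := h'
  obtain ⟨k, hk⟩ := h''
  refine ⟨k - i - j, ?_⟩
  simp only [map_add, LinearMap.add_apply, hB w' w] at hk
  push_cast
  linear_combination (hk - hi - hj) / 2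

theorem exists_gramDet_eq_int {L : Submodule ℤ V} (hint : ∀ x ∈ L, ∀ y ∈ L, ∃ n : ℤ, B x y = n)
    {l m : V} (hl : l ∈ L) (hm : m ∈ L) : ∃ n : ℤ, gramDet B l m = n := by
  obtain ⟨a, ha⟩ := hint l hl l hl
  obtain ⟨b, hb⟩ := hint l hl m hm
  obtain ⟨c, hc⟩ := hint m hm m hm
  exact ⟨a * c - b * b, by rw [gramDet, ha, hb, hc]; push_cast; ring⟩

theorem exists_gramDet_mul_gramDet_eq_sq (hB : ∀ u v, B u v = B v u) {l m x y : V}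
    (hx : x ∈ span ℚ {l, m}) (hy : y ∈ span ℚ {l, m}) (hx' : x ∈ dualLattice B (span ℤ {l, m}))
    (hy' : y ∈ dualLattice B (span ℤ {l, m})) :
    ∃ Φ : ℤ, gramDet B x y * gramDet B l m = Φ ^ 2 := by
  have hl : l ∈ span ℤ {l, m} := subset_span (by simp)
  have hm : m ∈ span ℤ {l, m} := subset_span (by simp)
  obtain ⟨a, ha⟩ := hx' l hl
  obtain ⟨b, hb⟩ := hx' m hm
  obtain ⟨c, hc⟩ := hy' l hl
  obtain ⟨d, hd⟩ := hy' m hm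
  exact ⟨a * d - b * c, by rw [gramDet_mul_gramDet hB hx hy, ha, hb, hc, hd]; push_cast; ring⟩

theorem exists_sq_mul_gramDet_eq_mul_sub_one {r : ℕ} (hr : (r : ℚ) ≠ 0) {x y : V}
    (hqx : ∃ n : ℤ, B x x = 2 * n) (hqy : ∃ n : ℤ, B y y = 2 * n)
    (hbxy : ∃ n : ℤ, B x y = 1 / r + n) :
    ∃ k : ℤ, r ^ 2 * gramDet B x y = r * k - 1 := by
  obtain ⟨nx, hnx⟩ := hqx
  obtain ⟨ny, hny⟩ := hqy
  obtain ⟨nb, hnb⟩ := hbxy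
  refine ⟨4 * r * nx * ny - 2 * nb - r * nb ^ 2, ?_⟩
  rw [gramDet, hnx, hny, hnb]
  field_simp
  push_cast
  ring

theorem exists_hyperbolic_basis (hB : ∀ u v, B u v = B v u) {l₀ m₀ : V} {c : ℚ} {A Q C : ℤ}
    (h : Q ^ 2 - 4 * A * C = 1) (hl : B l₀ l₀ = c * (2 * A)) (hlm : B l₀ m₀ = c * Q)
    (hm : B m₀ m₀ = c * (2 * C)) :
    ∃ l m : V, span ℤ {l₀, m₀} = span ℤ {l, m} ∧ B l l = 0 ∧ B m m = 0 ∧ B l m = c := by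
  obtain ⟨α, β, γ, δ, hdet, rfl, rfl, rfl⟩ := Int.exists_hyperbolic_factorization h
  refine ⟨δ • l₀ - γ • m₀, α • m₀ - β • l₀, span_pair_eq_of_det_eq_one hdet, ?_⟩
  have hdet' : (α * δ - β * γ : ℚ) = 1 := by exact_mod_cast hdet
  simp only [map_sub, map_zsmul, LinearMap.sub_apply, LinearMap.smul_apply, zsmul_eq_mul,
    hB m₀ l₀, hl, hlm, hm]
  push_cast
  exact ⟨by ring, by ring, by linear_combination c * (α * δ - β * γ + 1 : ℚ) * hdet'⟩

theorem exists_hyperbolic_basis_of_dual_pair (hB : ∀ u v, B u v = B v u) {r : ℕ}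
    (hr : (r : ℚ) ≠ 0) {l₀ m₀ e f : V} {n₁ n₂ n₃ : ℤ}
    (hee : B e e * gramDet B l₀ m₀ = B m₀ m₀) (hff : B f f * gramDet B l₀ m₀ = B l₀ l₀)
    (hef : B e f * gramDet B l₀ m₀ = -B l₀ m₀) (hD : gramDet B l₀ m₀ = -r ^ 2)
    (hn₁ : r * B e e = 2 * n₁) (hn₂ : r * B f f = 2 * n₂) (hn₃ : r * B e f = n₃) :
    ∃ l m : V, span ℤ {l₀, m₀} = span ℤ {l, m} ∧ B l l = 0 ∧ B m m = 0 ∧ B l m = r := by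
  have hl : B l₀ l₀ = r * (2 * (-n₂ : ℤ)) := by
    push_cast; linear_combination -hff + B f f * hD - r * hn₂
  have hlm : B l₀ m₀ = r * n₃ := by linear_combination hef - B e f * hD + r * hn₃
  have hm : B m₀ m₀ = r * (2 * (-n₁ : ℤ)) := by
    push_cast; linear_combination -hee + B e e * hD - r * hn₁
  refine exists_hyperbolic_basis hB ?_ hl hlm hm
  have : (r : ℚ) ^ 2 * (((n₃ ^ 2 - 4 * -n₂ * -n₁ : ℤ) : ℚ) - 1) = 0 := by
    rw [gramDet, hl, hlm, hm] at hD
    push_cast at hD ⊢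
    linear_combination -hD
  exact_mod_cast sub_eq_zero.mp ((mul_eq_zero.mp this).resolve_left (pow_ne_zero 2 hr))

end

theorem stmt_15_general
    (r : ℕ) (hr : 2 < r)
    (V : Type) [AddCommGroup V] [Module ℚ V]
    (B : V →ₗ[ℚ] V →ₗ[ℚ] ℚ)
    (hsymm : ∀ x y, B x y = B y x)
    (l₀ m₀ : V)
    (L : Submodule ℤ V)
    (hL : L = Submodule.span ℤ {l₀, m₀})
    (hint : ∀ x ∈ L, ∀ y ∈ L, ∃ n : ℤ, B x y = (n : ℚ))
    (heven : ∀ x ∈ L, ∃ n : ℤ, B x x = 2 * (n : ℚ))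
    (hsig : B l₀ l₀ * B m₀ m₀ - B l₀ m₀ * B l₀ m₀ < 0)
    (x y : V)
    (hx : ∀ z ∈ L, ∃ n : ℤ, B x z = (n : ℚ))
    (hy : ∀ z ∈ L, ∃ n : ℤ, B y z = (n : ℚ))
    (hgen : ∀ w : V, (∀ z ∈ L, ∃ n : ℤ, B w z = (n : ℚ)) →
      ∃ (a b : ℤ) (u : V), u ∈ L ∧ w = a • x + b • y + u)
    (hqx : ∃ n : ℤ, B x x = 2 * (n : ℚ))
    (hqy : ∃ n : ℤ, B y y = 2 * (n : ℚ))
    (hbxy : ∃ n : ℤ, B x y = 1 / (r : ℚ) + (n : ℚ)) :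
    ∃ l m : V, l ∈ L ∧ m ∈ L ∧ L = Submodule.span ℤ {l, m} ∧
      B l l = 0 ∧ B m m = 0 ∧ B l m = (r : ℚ) := by
  subst hL
  have hr0 : (r : ℚ) ≠ 0 := by positivity
  obtain ⟨e, f, he, hf, hel, hem, hfl, hfm, hee, hff, hef⟩ := exists_dual_pair hsymm hsig.ne
  have he' : e ∈ dualLattice B (span ℤ {l₀, m₀}) :=
    mem_dualLattice_span_pair ⟨1, by simp [hel]⟩ ⟨0, by simp [hem]⟩
  have hf' : f ∈ dualLattice B (span ℤ {l₀, m₀}) :=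
    mem_dualLattice_span_pair ⟨0, by simp [hfl]⟩ ⟨1, by simp [hfm]⟩
  obtain ⟨hxS, hyS⟩ := mem_span_rat_of_dualLattice_subset he hf hel hem hfl hfm hgen
  have hq_even : ∀ w ∈ dualLattice B (span ℤ {l₀, m₀}), ∃ n : ℤ, r * B w w = 2 * n :=
    fun _ => exists_mul_apply_self_eq_two_mul_of_mem_dualLattice hsymm hr0 hx hy heven hqx hqy
      hbxy hgen
  obtain ⟨n₁, hn₁⟩ := hq_even e he'
  obtain ⟨n₂, hn₂⟩ := hq_even f hf'
  obtain ⟨n₃, hn₃⟩ := exists_mul_apply_eq_of_even hsymm ⟨n₁, hn₁⟩ ⟨n₂, hn₂⟩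
    (hq_even _ (add_mem_dualLattice he' hf'))
  have hGe : gramDet B e f * gramDet B l₀ m₀ = 1 := by
    rw [gramDet_mul_gramDet hsymm he hf, hel, hem, hfl, hfm]; norm_num
  have hGe_int : (r : ℚ) ^ 2 * gramDet B e f = ((4 * n₁ * n₂ - n₃ ^ 2 : ℤ) : ℚ) := by
    rw [gramDet]; push_cast
    linear_combination r * B f f * hn₁ + 2 * n₁ * hn₂ - (r * B e f + n₃) * hn₃
  have hD : gramDet B l₀ m₀ = -r ^ 2 := eq_neg_sq_of_gramDet_relations hsig
    (exists_gramDet_eq_int hint (subset_span (by simp)) (subset_span (by simp))) hGe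
    (exists_gramDet_mul_gramDet_eq_sq hsymm hxS hyS hx hy) ⟨_, hGe_int⟩
    (exists_sq_mul_gramDet_eq_mul_sub_one hr0 hqx hqy hbxy)
  obtain ⟨l, m, hspan, hll, hmm, hlm⟩ :=
    exists_hyperbolic_basis_of_dual_pair hsymm hr0 hee hff hef hD hn₁ hn₂ hn₃
  exact ⟨l, m, hspan ▸ subset_span (by simp), hspan ▸ subset_span (by simp), hspan, hll, hmm, hlm⟩

/-- Let `r > 2` and let `L` be an even lattice of signature `(1,1)` whose
discriminant form is isometric to that of `U(r)`.  Then `L ≅ U(r)`; equivalently, the genus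
of `U(r)` contains a single isometry class.  Here `L` is realised as the ℤ-span of a basis
`l₀, m₀` of a rational quadratic space `(V, B)`; signature `(1,1)` is encoded by
`det(Gram) < 0`; and the discriminant-form hypothesis is encoded by dual vectors `x, y`
generating `L^∨/L ≅ (ℤ/r)²` with `q(x) = q(y) = 0 (mod 2ℤ)` and `b(x,y) = 1/r (mod ℤ)`.
The conclusion produces a basis `l, m` of `L` with Gram matrix `[[0,r],[r,0]]`. -/
theorem stmt_15
    (r : ℕ) (hr : 2 < r)
    (V : Type) [AddCommGroup V] [Module ℚ V]
    (B : V →ₗ[ℚ] V →ₗ[ℚ] ℚ)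
    (hsymm : ∀ x y, B x y = B y x)
    (l₀ m₀ : V)
    (hindep : LinearIndependent ℚ ![l₀, m₀])
    (L : Submodule ℤ V)
    (hL : L = Submodule.span ℤ {l₀, m₀})
    (hint : ∀ x ∈ L, ∀ y ∈ L, ∃ n : ℤ, B x y = (n : ℚ))
    (heven : ∀ x ∈ L, ∃ n : ℤ, B x x = 2 * (n : ℚ))
    (hsig : B l₀ l₀ * B m₀ m₀ - B l₀ m₀ * B l₀ m₀ < 0)
    (x y : V)
    (hx : ∀ z ∈ L, ∃ n : ℤ, B x z = (n : ℚ))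
    (hy : ∀ z ∈ L, ∃ n : ℤ, B y z = (n : ℚ))
    (hgen : ∀ w : V, (∀ z ∈ L, ∃ n : ℤ, B w z = (n : ℚ)) →
      ∃ (a b : ℤ) (u : V), u ∈ L ∧ w = a • x + b • y + u)
    (horder : ∀ a b : ℤ, a • x + b • y ∈ L → (r : ℤ) ∣ a ∧ (r : ℤ) ∣ b)
    (hqx : ∃ n : ℤ, B x x = 2 * (n : ℚ))
    (hqy : ∃ n : ℤ, B y y = 2 * (n : ℚ))
    (hbxy : ∃ n : ℤ, B x y = 1 / (r : ℚ) + (n : ℚ)) :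
    ∃ l m : V, l ∈ L ∧ m ∈ L ∧ L = Submodule.span ℤ {l, m} ∧
      B l l = 0 ∧ B m m = 0 ∧ B l m = (r : ℚ) :=
  stmt_15_general r hr V B hsymm l₀ m₀ L hL hint heven hsig x y hx hy hgen hqx hqy hbxy
end

section
/- Let L be an even lattice, U ⊂ L a hyperbolic plane summand with basis {e, f}, and E = ℤf + ℤl' a rank-2 primitive isotropic sublattice with l' ∈ U^⊥ isotropic. Suppose f' ∈ E also satisfies (e, f') = 1. Then l' ∈ (ℤe+ℤf)^⊥ ∩ (ℤe+ℤf')^⊥, and the orthogonal projection from (ℤe+ℤf)^⊥ to (ℤe+ℤf')^⊥ is an isometry which fixes l'. -/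
/-!
On the orthogonal complement of `ℤe + ℤf` we have `(e, x) = 0`, so the projection is just
`x ↦ x − (f', x)·e`. Since `e` is isotropic and orthogonal to both arguments, translating by
multiples of `e` does not change the form; its inverse is `z ↦ z − (f, z)·e`. The vector `l'` is
orthogonal to `e` and to `f' ∈ ℤf + ℤl'`, so it is fixed.
-/

namespace LinearMap

variable {R M : Type*} [CommRing R] [AddCommGroup M] [Module R M] (B : M →ₗ[R] M →ₗ[R] R)

/-- For isotropic `e` with `B e u = B u e = 1`, the orthogonal projection onto the complement of
the plane `Re + Ru`. -/
def hypPlaneProj (e u x : M) : M :=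
  x - B u x • e - B e x • u

variable {B} {e u x z : M}

theorem hypPlaneProj_eq_of_apply_eq_zero (hx : B e x = 0) :
    B.hypPlaneProj e u x = x - B u x • e := by
  simp [hypPlaneProj, hx]

theorem apply_hypPlaneProj_left (hee : B e e = 0) (heu : B e u = 1) :
    B e (B.hypPlaneProj e u x) = 0 := by
  simp [hypPlaneProj, hee, heu]

theorem apply_hypPlaneProj_right (hue : B u e = 1) (hx : B e x = 0) :
    B u (B.hypPlaneProj e u x) = 0 := by
  simp [hypPlaneProj_eq_of_apply_eq_zero hx, hue]

theorem apply_hypPlaneProj_hypPlaneProj (hee : B e e = 0) (hxe : B x e = 0) (hex : B e x = 0)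
    (hez : B e z = 0) : B (B.hypPlaneProj e u x) (B.hypPlaneProj e u z) = B x z := by
  simp [hypPlaneProj_eq_of_apply_eq_zero hex, hypPlaneProj_eq_of_apply_eq_zero hez, hee, hxe, hez]

theorem hypPlaneProj_eq_self (hu : B u x = 0) (he : B e x = 0) : B.hypPlaneProj e u x = x := by
  simp [hypPlaneProj, hu, he]

theorem exists_hypPlaneProj_eq {f : M} (hee : B e e = 0) (hfe : B f e = 1) (hue : B u e = 1)
    (hez : B e z = 0) (huz : B u z = 0) :
    ∃ x, B e x = 0 ∧ B f x = 0 ∧ B.hypPlaneProj e u x = z := by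
  have hex : B e (z - B f z • e) = 0 := by simp [hez, hee]
  refine ⟨z - B f z • e, hex, by simp [hfe], ?_⟩
  simp [hypPlaneProj_eq_of_apply_eq_zero hex, huz, hue]

end LinearMap

open LinearMap

theorem stmt_16_general
    (L : Type) [AddCommGroup L] [Module ℤ L]
    (B : L →ₗ[ℤ] L →ₗ[ℤ] ℤ)
    (hsymm : ∀ x y, B x y = B y x)
    (e f l' : L)
    (hee : B e e = 0) (hef : B e f = 1)
    (hl' : B l' l' = 0) (hel' : B e l' = 0) (hfl' : B f l' = 0)
    (f' : L) (hf'E : ∃ s t : ℤ, f' = s • f + t • l') (hef' : B e f' = 1) :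
    B f' l' = 0 ∧
    (∀ x : L, B e x = 0 → B f x = 0 →
      B e (x - (B f' x) • e - (B e x) • f') = 0 ∧
      B f' (x - (B f' x) • e - (B e x) • f') = 0) ∧
    (∀ x z : L, B e x = 0 → B f x = 0 → B e z = 0 → B f z = 0 →
      B (x - (B f' x) • e - (B e x) • f') (z - (B f' z) • e - (B e z) • f') = B x z) ∧
    (∀ z : L, B e z = 0 → B f' z = 0 →
      ∃ x : L, B e x = 0 ∧ B f x = 0 ∧ x - (B f' x) • e - (B e x) • f' = z) ∧
    l' - (B f' l') • e - (B e l') • f' = l' := by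
  -- The `•` of the statement is `zsmul`; identify the given `ℤ`-module structure with it.
  obtain rfl : ‹Module ℤ L› = AddCommGroup.toIntModule L := Subsingleton.elim _ _
  have hf'l' : B f' l' = 0 := by
    obtain ⟨s, t, rfl⟩ := hf'E
    simp [hfl', hl']
  have hf'e : B f' e = 1 := hsymm f' e ▸ hef'
  have hfe : B f e = 1 := hsymm f e ▸ hef
  refine ⟨hf'l', fun x hex _ => ⟨?_, ?_⟩, fun x z hex _ hez _ => ?_, fun z hez hf'z => ?_, ?_⟩
  · exact apply_hypPlaneProj_left hee hef'
  · exact apply_hypPlaneProj_right hf'e hex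
  · exact apply_hypPlaneProj_hypPlaneProj hee (hsymm x e ▸ hex) hex hez
  · exact exists_hypPlaneProj_eq hee hfe hf'e hez hf'z
  · exact hypPlaneProj_eq_self hf'l' hel'

/-- Let `L` be an even lattice, `U = ℤe + ℤf ⊂ L` a hyperbolic plane
summand, and `E = ℤf + ℤl'` a rank-2 isotropic sublattice with `l' ∈ U^⊥` isotropic.
Suppose `f' ∈ E` also satisfies `(e, f') = 1`.  Then `l'` lies in both
`(ℤe+ℤf)^⊥` and `(ℤe+ℤf')^⊥`, and the orthogonal projection
`P : x ↦ x − (f',x)·e − (e,x)·f'` from `(ℤe+ℤf)^⊥` to `(ℤe+ℤf')^⊥` is an isometry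
(form-preserving, mapping onto the target) which fixes `l'`. -/
theorem stmt_16
    (L : Type) [AddCommGroup L] [Module ℤ L]
    (B : L →ₗ[ℤ] L →ₗ[ℤ] ℤ)
    (hsymm : ∀ x y, B x y = B y x) (heven : ∀ x, Even (B x x))
    (e f l' : L)
    (hee : B e e = 0) (hff : B f f = 0) (hef : B e f = 1)
    (hl' : B l' l' = 0) (hel' : B e l' = 0) (hfl' : B f l' = 0)
    (f' : L) (hf'E : ∃ s t : ℤ, f' = s • f + t • l') (hef' : B e f' = 1) :
    B f' l' = 0 ∧
    (∀ x : L, B e x = 0 → B f x = 0 →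
      B e (x - (B f' x) • e - (B e x) • f') = 0 ∧
      B f' (x - (B f' x) • e - (B e x) • f') = 0) ∧
    (∀ x z : L, B e x = 0 → B f x = 0 → B e z = 0 → B f z = 0 →
      B (x - (B f' x) • e - (B e x) • f') (z - (B f' z) • e - (B e z) • f') = B x z) ∧
    (∀ z : L, B e z = 0 → B f' z = 0 →
      ∃ x : L, B e x = 0 ∧ B f x = 0 ∧ x - (B f' x) • e - (B e x) • f' = z) ∧
    l' - (B f' l') • e - (B e l') • f' = l' :=
  stmt_16_general L B hsymm e f l' hee hef hl' hel' hfl' f' hf'E hef'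
end

section
/- Let L be an even lattice containing two orthogonal sublattices U = ℤe + ℤf and U(r) = ℤl + ℤm, where r is a fixed integer, (e,f) = 1, (l,m) = r, (e,e) = (f,f) = (l,l) = (m,m) = 0 and all pairings between {e,f} and {l,m} are zero, and let α, β, γ, δ ∈ ℤ with βδ + rαγ = 1. Define f₂ = αl + βf, e₂ = γm + δe, l₂ = δl − rγf, m₂ = βm − rαe. Then the map sending e ↦ e₂, f ↦ f₂, l ↦ l₂, m ↦ m₂ is an isometry of U(r) ⊕ U onto itself preserving the sublattice E = ℤf + ℤl. -/
/-- Let `L = U(r) ⊕ U` with `U(r) = ℤl + ℤm` (`(l,m) = r`,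
`(l,l) = (m,m) = 0`) and `U = ℤe + ℤf` (`(e,f) = 1`, `(e,e) = (f,f) = 0`), the two summands
orthogonal, and let `α, β, γ, δ ∈ ℤ` satisfy `βδ + rαγ = 1`.  Define `f₂ = αl + βf`,
`e₂ = γm + δe`, `l₂ = δl − rγf`, `m₂ = βm − rαe`.  Then the assignment `e ↦ e₂`, `f ↦ f₂`,
`l ↦ l₂`, `m ↦ m₂` extends to an isometry of `U(r) ⊕ U` onto itself which preserves the
sublattice `E = ℤf + ℤl`. -/
theorem stmt_19
    (r : ℤ)
    (L : Type) [AddCommGroup L] [Module ℤ L]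
    (B : L →ₗ[ℤ] L →ₗ[ℤ] ℤ)
    (hsymm : ∀ x y, B x y = B y x)
    (e f l m : L)
    (hef : B e f = 1) (hee : B e e = 0) (hff : B f f = 0)
    (hlm : B l m = r) (hll : B l l = 0) (hmm : B m m = 0)
    (hel : B e l = 0) (hem : B e m = 0) (hfl : B f l = 0) (hfm : B f m = 0)
    (bb : Module.Basis (Fin 4) ℤ L) (hbb : bb 0 = e ∧ bb 1 = f ∧ bb 2 = l ∧ bb 3 = m)
    (α β γ δ : ℤ) (h1 : β * δ + r * α * γ = 1) :
    ∃ φ : L ≃ₗ[ℤ] L,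
      (∀ x y, B (φ x) (φ y) = B x y) ∧
      φ e = γ • m + δ • e ∧ φ f = α • l + β • f ∧
      φ l = δ • l - (r * γ) • f ∧ φ m = β • m - (r * α) • e ∧
      Submodule.span ℤ ({α • l + β • f, δ • l - (r * γ) • f} : Set L)
        = Submodule.span ℤ ({f, l} : Set L) := by
  obtain ⟨hb0, hb1, hb2, hb3⟩ := hbb
  have hfe : B f e = 1 := by rw [hsymm]; exact hef
  have hml : B m l = r := by rw [hsymm]; exact hlm
  have hle : B l e = 0 := by rw [hsymm]; exact hel
  have hme : B m e = 0 := by rw [hsymm]; exact hem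
  have hlf : B l f = 0 := by rw [hsymm]; exact hfl
  have hmf : B m f = 0 := by rw [hsymm]; exact hfm
  have hmem : ∀ i : Fin 4, bb i = e ∨ bb i = f ∨ bb i = l ∨ bb i = m := by
    intro i
    fin_cases i
    exacts [Or.inl hb0, Or.inr (Or.inl hb1), Or.inr (Or.inr (Or.inl hb2)),
      Or.inr (Or.inr (Or.inr hb3))]
  obtain rfl : ‹Module ℤ L› = AddCommGroup.toIntModule L := Subsingleton.elim _ _
  set g : L →ₗ[ℤ] L := bb.constr ℤ
    ![γ • m + δ • e, α • l + β • f, δ • l - (r * γ) • f, β • m - (r * α) • e] with hg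
  set ψ : L →ₗ[ℤ] L := bb.constr ℤ
    ![β • e - γ • m, δ • f - α • l, (r * γ) • f + β • l, (r * α) • e + δ • m] with hψ
  have hge : g e = γ • m + δ • e := by
    conv_lhs => rw [← hb0]
    rw [hg, Module.Basis.constr_basis]; simp
  have hgf : g f = α • l + β • f := by
    conv_lhs => rw [← hb1]
    rw [hg, Module.Basis.constr_basis]; simp
  have hgl : g l = δ • l - (r * γ) • f := by
    conv_lhs => rw [← hb2]
    rw [hg, Module.Basis.constr_basis]; simp
  have hgm : g m = β • m - (r * α) • e := by
    conv_lhs => rw [← hb3]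
    rw [hg, Module.Basis.constr_basis]; simp
  have hψe : ψ e = β • e - γ • m := by
    conv_lhs => rw [← hb0]
    rw [hψ, Module.Basis.constr_basis]; simp
  have hψf : ψ f = δ • f - α • l := by
    conv_lhs => rw [← hb1]
    rw [hψ, Module.Basis.constr_basis]; simp
  have hψl : ψ l = (r * γ) • f + β • l := by
    conv_lhs => rw [← hb2]
    rw [hψ, Module.Basis.constr_basis]; simp
  have hψm : ψ m = (r * α) • e + δ • m := by
    conv_lhs => rw [← hb3]
    rw [hψ, Module.Basis.constr_basis]; simp
  have hgψ : g.comp ψ = LinearMap.id := by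
    apply bb.ext
    intro i
    rcases hmem i with h | h | h | h <;> rw [h] <;>
      simp only [LinearMap.comp_apply, LinearMap.id_apply,
        hψe, hψf, hψl, hψm, map_add, map_sub, map_zsmul, hge, hgf, hgl, hgm] <;>
      (simp only [← Int.cast_smul_eq_zsmul ℤ, Int.cast_id]; match_scalars <;> first | ring1 | linear_combination h1 | linear_combination -h1 | linear_combination r * h1 | linear_combination -r * h1)
  have hψg : ψ.comp g = LinearMap.id := by
    apply bb.ext
    intro i
    rcases hmem i with h | h | h | h <;> rw [h] <;>
      simp only [LinearMap.comp_apply, LinearMap.id_apply,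
        hψe, hψf, hψl, hψm, map_add, map_sub, map_zsmul, hge, hgf, hgl, hgm] <;>
      (simp only [← Int.cast_smul_eq_zsmul ℤ, Int.cast_id]; match_scalars <;> first | ring1 | linear_combination h1 | linear_combination -h1 | linear_combination r * h1 | linear_combination -r * h1)
  refine ⟨LinearEquiv.ofLinear g ψ hgψ hψg, ?_, hge, hgf, hgl, hgm, ?_⟩
  · have key : (B.compl₁₂ g g) = B := by
      apply bb.ext
      intro i
      apply bb.ext
      intro j
      rcases hmem i with h | h | h | h <;> rcases hmem j with h' | h' | h' | h' <;>
        rw [h, h'] <;>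
        simp only [LinearMap.compl₁₂_apply,
          hge, hgf, hgl, hgm, map_add, map_sub, map_zsmul, LinearMap.add_apply,
          LinearMap.sub_apply, LinearMap.smul_apply, smul_eq_mul, zsmul_eq_mul,
          Int.cast_id,
          hef, hee, hff, hlm, hll, hmm, hel, hem, hfl, hfm, hfe, hml, hle, hme, hlf, hmf] <;>
        (first | ring1 | linear_combination h1 | linear_combination -h1 | linear_combination r * h1 | linear_combination -r * h1)
    intro x y
    have := LinearMap.congr_fun (LinearMap.congr_fun key x) y
    simpa using this
  · apply le_antisymm
    · rw [Submodule.span_le]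
      intro x hx
      have hf : f ∈ Submodule.span ℤ ({f, l} : Set L) :=
        Submodule.subset_span (Or.inl rfl)
      have hl : l ∈ Submodule.span ℤ ({f, l} : Set L) :=
        Submodule.subset_span (Or.inr rfl)
      rcases hx with h | h
      · rw [h]
        exact Submodule.add_mem _ (zsmul_mem hl _) (zsmul_mem hf _)
      · simp only [Set.mem_singleton_iff] at h
        rw [h]
        exact Submodule.sub_mem _ (zsmul_mem hl _) (zsmul_mem hf _)
    · rw [Submodule.span_le]
      intro x hx
      have h2 : (α • l + β • f) ∈
          Submodule.span ℤ ({α • l + β • f, δ • l - (r * γ) • f} : Set L) :=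
        Submodule.subset_span (Or.inl rfl)
      have h3 : (δ • l - (r * γ) • f) ∈
          Submodule.span ℤ ({α • l + β • f, δ • l - (r * γ) • f} : Set L) :=
        Submodule.subset_span (Or.inr rfl)
      rcases hx with h | h
      · rw [h]
        have hmem := Submodule.sub_mem _ (zsmul_mem h2 δ) (zsmul_mem h3 α)
        have heq : δ • (α • l + β • f) - α • (δ • l - (r * γ) • f) = f := by
          simp only [← Int.cast_smul_eq_zsmul ℤ, Int.cast_id]
          match_scalars <;> first | ring1 | linear_combination h1 | linear_combination -h1 | linear_combination r * h1 | linear_combination -r * h1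
        rwa [heq] at hmem
      · simp only [Set.mem_singleton_iff] at h
        rw [h]
        have hmem := Submodule.add_mem _ (zsmul_mem h2 (r * γ)) (zsmul_mem h3 β)
        have heq : (r * γ) • (α • l + β • f) + β • (δ • l - (r * γ) • f) = l := by
          simp only [← Int.cast_smul_eq_zsmul ℤ, Int.cast_id]
          match_scalars <;> first | ring1 | linear_combination h1 | linear_combination -h1 | linear_combination r * h1 | linear_combination -r * h1
        rwa [heq] at hmem
end
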